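/- arXiv:1608.00524 — 5 statements merged into one kernel-verified Lean document; each statement's English description precedes it below -/
import Mathlib

section
/- Let X ⊂ ℝⁿ be a compact convex set, N ⊆ X a closed convex set with 0 ∈ N, V ⊆ X a nonempty compact convex set with 0 ∈ V, and W ⊂ ℝⁿ a nonempty closed convex set with 0 ∉ W which is semi-conic (w ∈ W and ρ ≥ 1 imply ρw ∈ W). Let 𝒰 be a nonempty compact convex set of symmetric positive definite ν×ν matrices, Ā a ν×n real matrix, and R > 0 such that for every ρ ∈ (0, R] the set F(ρ) = {(z, v, w) : z ∈ N, v ∈ V, w ∈ W, v + ρw ∈ X} is nonempty. Define, for ρ ∈ (0, R], 𝒮𝒱(ρ) = max over (z, v, w) ∈ F(ρ) and Θ ∈ 𝒰 of −⅛ (Ā(v + ρw − z))ᵀ Θ⁻¹ (Ā(v + ρw − z)). Then 𝒮𝒱 is a nonpositive, nonincreasing, concave and continuous function on (0, R], and lim_{ρ→0+} 𝒮𝒱(ρ) = 0. -/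
/-!
Write `𝒮𝒱(ρ)` as the supremum of the set of objective values over `F(ρ) × 𝒰`.
Replacing `w` by `(ρ₂ / ρ₁) • w ∈ W` shows that this set shrinks as `ρ` grows, so `𝒮𝒱` is
nonincreasing. The matrix-fractional function `(x, Θ) ↦ xᵀ Θ⁻¹ x` is jointly convex, being the
supremum over `y` of the affine functions `2 yᵀ x - yᵀ Θ y`; since convex combinations of feasible
points at `ρ₁, ρ₂` (with the `w`'s recombined with weights `a ρ₁ / ρ`, `b ρ₂ / ρ`) are feasible at
`ρ = a ρ₁ + b ρ₂`, `𝒮𝒱` is concave, hence continuous on `(0, R)`. At `ρ = R`, upper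
semicontinuity follows from compactness of `N × V × X × 𝒰` after substituting `u = v + ρ w`.
Finally, shrinking a feasible point at `R` towards `0` by the factor `ρ / R` gives
`(ρ / R)² s ≤ 𝒮𝒱(ρ) ≤ 0` for a fixed value `s`, so `𝒮𝒱(ρ) → 0`.
-/

open Matrix Set Filter Topology

namespace Matrix.PosDef

variable {m : Type*} [Fintype m] [DecidableEq m] {Θ : Matrix m m ℝ}

lemma mulVec_inv_mulVec (hΘ : Θ.PosDef) (x : m → ℝ) : Θ *ᵥ (Θ⁻¹ *ᵥ x) = x := by
  rw [mulVec_mulVec, mul_nonsing_inv _ ((isUnit_iff_isUnit_det _).1 hΘ.isUnit), one_mulVec]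

lemma two_mul_dotProduct_sub_le (hΘ : Θ.PosDef) (x y : m → ℝ) :
    2 * (y ⬝ᵥ x) - y ⬝ᵥ (Θ *ᵥ y) ≤ x ⬝ᵥ (Θ⁻¹ *ᵥ x) := by
  set c := Θ⁻¹ *ᵥ x
  have hΘc : Θ *ᵥ c = x := hΘ.mulVec_inv_mulVec x
  have hsymm : c ⬝ᵥ (Θ *ᵥ y) = y ⬝ᵥ x := by
    rw [dotProduct_mulVec, ← mulVec_transpose, (isHermitian_iff_isSymm.1 hΘ.isHermitian).eq,
      hΘc, dotProduct_comm]
  have hnonneg := hΘ.posSemidef.dotProduct_mulVec_nonneg (y - c)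
  simp only [star_trivial, mulVec_sub, dotProduct_sub, sub_dotProduct, hΘc, hsymm] at hnonneg
  rw [dotProduct_comm x c]
  linarith

lemma continuousAt_inv (hΘ : Θ.PosDef) : ContinuousAt Inv.inv Θ :=
  continuousAt_matrix_inv Θ (by
    rw [Ring.inverse_eq_inv']; exact continuousAt_inv₀ hΘ.det_pos.ne')

lemma dotProduct_inv_mulVec_combo_le {Θ₁ Θ₂ : Matrix m m ℝ} (h₁ : Θ₁.PosDef)
    (h₂ : Θ₂.PosDef) {a b : ℝ} (ha : 0 ≤ a) (hb : 0 ≤ b) (h : (a • Θ₁ + b • Θ₂).PosDef)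
    (x₁ x₂ : m → ℝ) :
    (a • x₁ + b • x₂) ⬝ᵥ ((a • Θ₁ + b • Θ₂)⁻¹ *ᵥ (a • x₁ + b • x₂)) ≤
      a * (x₁ ⬝ᵥ (Θ₁⁻¹ *ᵥ x₁)) + b * (x₂ ⬝ᵥ (Θ₂⁻¹ *ᵥ x₂)) := by
  set x := a • x₁ + b • x₂
  set y := (a • Θ₁ + b • Θ₂)⁻¹ *ᵥ x
  have hy : (a • Θ₁ + b • Θ₂) *ᵥ y = x := h.mulVec_inv_mulVec x
  clear_value y
  -- `x ⬝ᵥ Θ⁻¹ x = max_y (2 y ⬝ᵥ x - y ⬝ᵥ Θ y)`, and the right side is affine in `(x, Θ)`.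
  have hx : y ⬝ᵥ x = a * (y ⬝ᵥ x₁) + b * (y ⬝ᵥ x₂) := by
    simp only [x, dotProduct_add, dotProduct_smul, smul_eq_mul]
  have hΘ : y ⬝ᵥ x = a * (y ⬝ᵥ (Θ₁ *ᵥ y)) + b * (y ⬝ᵥ (Θ₂ *ᵥ y)) := by
    rw [← hy, add_mulVec, smul_mulVec, smul_mulVec, dotProduct_add, dotProduct_smul,
      dotProduct_smul, smul_eq_mul, smul_eq_mul]
  calc x ⬝ᵥ y
      = a * (2 * (y ⬝ᵥ x₁) - y ⬝ᵥ (Θ₁ *ᵥ y)) + b * (2 * (y ⬝ᵥ x₂) - y ⬝ᵥ (Θ₂ *ᵥ y)) := by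
        rw [dotProduct_comm]; linarith
    _ ≤ _ := by
      gcongr
      · exact h₁.two_mul_dotProduct_sub_le x₁ y
      · exact h₂.two_mul_dotProduct_sub_le x₂ y

end Matrix.PosDef

lemma concaveOn_sSup_of_forall_exists_le {s : Set ℝ} {S : ℝ → Set ℝ} (hs : Convex ℝ s)
    (hne : ∀ x ∈ s, (S x).Nonempty) (hbdd : ∀ x ∈ s, BddAbove (S x))
    (hcombo : ∀ x ∈ s, ∀ y ∈ s, ∀ a b : ℝ, 0 ≤ a → 0 ≤ b → a + b = 1 →
      ∀ p ∈ S x, ∀ q ∈ S y, ∃ r ∈ S (a * x + b * y), a * p + b * q ≤ r) :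
    ConcaveOn ℝ s (fun x ↦ sSup (S x)) := by
  refine ⟨hs, fun x hx y hy a b ha hb hab ↦ ?_⟩
  show a • sSup (S x) + b • sSup (S y) ≤ sSup (S (a * x + b * y))
  rw [← Real.sSup_smul_of_nonneg ha, ← Real.sSup_smul_of_nonneg hb,
    ← csSup_add ((hne x hx).smul_set) ((hbdd x hx).smul_of_nonneg ha)
      ((hne y hy).smul_set) ((hbdd y hy).smul_of_nonneg hb)]
  refine csSup_le (((hne x hx).smul_set).add (hne y hy).smul_set) ?_
  rintro _ ⟨_, ⟨p, hp, rfl⟩, _, ⟨q, hq, rfl⟩, rfl⟩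
  obtain ⟨r, hr, hle⟩ := hcombo x hx y hy a b ha hb hab p hp q hq
  exact hle.trans (le_csSup (hbdd _ (hs hx hy ha hb hab)) hr)

lemma AntitoneOn.continuousWithinAt_Ioc_right {f : ℝ → ℝ} {a b : ℝ}
    (hf : AntitoneOn f (Ioc a b)) (hab : a < b) (hb : UpperSemicontinuousWithinAt f (Ioc a b) b) :
    ContinuousWithinAt f (Ioc a b) b := by
  refine continuousWithinAt_iff_lower_upperSemicontinuousWithinAt.2 ⟨fun c hc ↦ ?_, hb⟩
  filter_upwards [self_mem_nhdsWithin] with x hx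
  exact hc.trans_le (hf hx ⟨hab, le_rfl⟩ hx.2)

section ValueSet

variable {ι κ : Type*} [Fintype ι] [Fintype κ] [DecidableEq κ]

noncomputable def objective (A : Matrix κ ι ℝ) (Θ : Matrix κ κ ℝ) (x : ι → ℝ) : ℝ :=
  -(1 / 8) * ((A *ᵥ x) ⬝ᵥ (Θ⁻¹ *ᵥ (A *ᵥ x)))

/-- The values whose supremum is `𝒮𝒱(ρ)`: `x = v + ρ w - z` with `(z, v, w) ∈ F(ρ)`. -/
def valueSet (X N V W : Set (ι → ℝ)) (𝒰 : Set (Matrix κ κ ℝ)) (A : Matrix κ ι ℝ) (ρ : ℝ) :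
    Set ℝ :=
  {s | ∃ z ∈ N, ∃ v ∈ V, ∃ w ∈ W, v + ρ • w ∈ X ∧ ∃ Θ ∈ 𝒰, s = objective A Θ (v + ρ • w - z)}

variable {A : Matrix κ ι ℝ} {Θ : Matrix κ κ ℝ}

lemma objective_nonpos (hΘ : Θ.PosDef) (x : ι → ℝ) : objective A Θ x ≤ 0 := by
  have := hΘ.inv.posSemidef.dotProduct_mulVec_nonneg (A *ᵥ x)
  simp only [star_trivial] at this
  unfold objective
  linarith

lemma objective_smul (Θ : Matrix κ κ ℝ) (t : ℝ) (x : ι → ℝ) :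
    objective A Θ (t • x) = t ^ 2 * objective A Θ x := by
  simp only [objective, mulVec_smul, smul_dotProduct, dotProduct_smul, smul_eq_mul]
  ring

lemma objective_combo_le {Θ₁ Θ₂ : Matrix κ κ ℝ} (h₁ : Θ₁.PosDef) (h₂ : Θ₂.PosDef) {a b : ℝ}
    (ha : 0 ≤ a) (hb : 0 ≤ b) (h : (a • Θ₁ + b • Θ₂).PosDef) (x₁ x₂ : ι → ℝ) :
    a * objective A Θ₁ x₁ + b * objective A Θ₂ x₂ ≤
      objective A (a • Θ₁ + b • Θ₂) (a • x₁ + b • x₂) := by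
  have := h₁.dotProduct_inv_mulVec_combo_le h₂ ha hb h (A *ᵥ x₁) (A *ᵥ x₂)
  rw [objective, objective, objective, mulVec_add, mulVec_smul, mulVec_smul]
  linarith

lemma continuousAt_objective (hΘ : Θ.PosDef) (x : ι → ℝ) :
    ContinuousAt (fun p : Matrix κ κ ℝ × (ι → ℝ) ↦ objective A p.1 p.2) (Θ, x) := by
  have hinv : ContinuousAt (fun p : Matrix κ κ ℝ × (ι → ℝ) ↦ p.1⁻¹) (Θ, x) :=
    hΘ.continuousAt_inv.comp continuousAt_fst
  unfold objective
  fun_prop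

variable {X N V W : Set (ι → ℝ)} {𝒰 : Set (Matrix κ κ ℝ)}

lemma valueSet_subset_Iic (h𝒰pd : ∀ Θ ∈ 𝒰, Θ.PosDef) (ρ : ℝ) :
    valueSet X N V W 𝒰 A ρ ⊆ Iic 0 := by
  rintro _ ⟨z, -, v, -, w, -, -, Θ, hΘ, rfl⟩
  exact objective_nonpos (h𝒰pd Θ hΘ) _

lemma bddAbove_valueSet (h𝒰pd : ∀ Θ ∈ 𝒰, Θ.PosDef) (ρ : ℝ) :
    BddAbove (valueSet X N V W 𝒰 A ρ) :=
  ⟨0, valueSet_subset_Iic h𝒰pd ρ⟩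

lemma valueSet_subset_of_le (hWsc : ∀ w ∈ W, ∀ ρ : ℝ, 1 ≤ ρ → ρ • w ∈ W) {ρ₁ ρ₂ : ℝ}
    (hρ₁ : 0 < ρ₁) (h : ρ₁ ≤ ρ₂) : valueSet X N V W 𝒰 A ρ₂ ⊆ valueSet X N V W 𝒰 A ρ₁ := by
  rintro _ ⟨z, hz, v, hv, w, hw, hX, Θ, hΘ, rfl⟩
  have hρw : ρ₁ • (ρ₂ / ρ₁) • w = ρ₂ • w := by rw [smul_smul, mul_div_cancel₀ _ hρ₁.ne']
  refine ⟨z, hz, v, hv, (ρ₂ / ρ₁) • w, hWsc w hw _ ((one_le_div₀ hρ₁).2 h), ?_, Θ, hΘ, ?_⟩ <;>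
    rw [hρw]
  exact hX

lemma exists_mem_valueSet_combo_le (hXconv : Convex ℝ X) (hNconv : Convex ℝ N)
    (hVconv : Convex ℝ V) (hWconv : Convex ℝ W) (h𝒰conv : Convex ℝ 𝒰)
    (h𝒰pd : ∀ Θ ∈ 𝒰, Θ.PosDef) {ρ₁ ρ₂ a b : ℝ} (hρ₁ : 0 < ρ₁) (hρ₂ : 0 < ρ₂)
    (ha : 0 ≤ a) (hb : 0 ≤ b) (hab : a + b = 1) {p q : ℝ} (hp : p ∈ valueSet X N V W 𝒰 A ρ₁)
    (hq : q ∈ valueSet X N V W 𝒰 A ρ₂) :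
    ∃ r ∈ valueSet X N V W 𝒰 A (a * ρ₁ + b * ρ₂), a * p + b * q ≤ r := by
  obtain ⟨z₁, hz₁, v₁, hv₁, w₁, hw₁, hX₁, Θ₁, hΘ₁, rfl⟩ := hp
  obtain ⟨z₂, hz₂, v₂, hv₂, w₂, hw₂, hX₂, Θ₂, hΘ₂, rfl⟩ := hq
  set ρ := a * ρ₁ + b * ρ₂
  have hρ : 0 < ρ := convex_Ioi (0 : ℝ) hρ₁ hρ₂ ha hb hab
  set w := (a * ρ₁ / ρ) • w₁ + (b * ρ₂ / ρ) • w₂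
  have hw : w ∈ W :=
    hWconv hw₁ hw₂ (by positivity) (by positivity) (by rw [← add_div, div_self hρ.ne'])
  have hρw : ρ • w = (a * ρ₁) • w₁ + (b * ρ₂) • w₂ := by
    simp only [w, smul_add, smul_smul, mul_div_cancel₀ _ hρ.ne']
  have hu : a • v₁ + b • v₂ + ρ • w = a • (v₁ + ρ₁ • w₁) + b • (v₂ + ρ₂ • w₂) := by
    rw [hρw]; module
  have hx : a • v₁ + b • v₂ + ρ • w - (a • z₁ + b • z₂) =
      a • (v₁ + ρ₁ • w₁ - z₁) + b • (v₂ + ρ₂ • w₂ - z₂) := by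
    rw [hu]; module
  refine ⟨_, ⟨a • z₁ + b • z₂, hNconv hz₁ hz₂ ha hb hab, a • v₁ + b • v₂,
    hVconv hv₁ hv₂ ha hb hab, w, hw, hu ▸ hXconv hX₁ hX₂ ha hb hab, a • Θ₁ + b • Θ₂,
    h𝒰conv hΘ₁ hΘ₂ ha hb hab, rfl⟩, ?_⟩
  rw [hx]
  exact objective_combo_le (h𝒰pd _ hΘ₁) (h𝒰pd _ hΘ₂) ha hb
    (h𝒰pd _ (h𝒰conv hΘ₁ hΘ₂ ha hb hab)) _ _

lemma sq_mul_mem_valueSet (hXconv : Convex ℝ X) (hNconv : Convex ℝ N) (hVconv : Convex ℝ V)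
    (hX0 : (0 : ι → ℝ) ∈ X) (hN0 : (0 : ι → ℝ) ∈ N) (hV0 : (0 : ι → ℝ) ∈ V) {t ρ s : ℝ}
    (ht₀ : 0 ≤ t) (ht₁ : t ≤ 1) (hs : s ∈ valueSet X N V W 𝒰 A ρ) :
    t ^ 2 * s ∈ valueSet X N V W 𝒰 A (t * ρ) := by
  obtain ⟨z, hz, v, hv, w, hw, hX, Θ, hΘ, rfl⟩ := hs
  have hu : t • v + (t * ρ) • w = t • (v + ρ • w) := by module
  refine ⟨t • z, hNconv.smul_mem_of_zero_mem hN0 hz ⟨ht₀, ht₁⟩, t • v,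
    hVconv.smul_mem_of_zero_mem hV0 hv ⟨ht₀, ht₁⟩, w, hw,
    hu ▸ hXconv.smul_mem_of_zero_mem hX0 hX ⟨ht₀, ht₁⟩, Θ, hΘ, ?_⟩
  rw [hu, ← smul_sub, objective_smul]

lemma eventually_forall_mem_valueSet_lt (hXcomp : IsCompact X) (hNX : N ⊆ X)
    (hNclosed : IsClosed N) (hVcomp : IsCompact V) (hWclosed : IsClosed W)
    (h𝒰comp : IsCompact 𝒰) (h𝒰pd : ∀ Θ ∈ 𝒰, Θ.PosDef) {ρ₀ c : ℝ} (hρ₀ : ρ₀ ≠ 0)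
    (hc : ∀ s ∈ valueSet X N V W 𝒰 A ρ₀, s < c) :
    ∀ᶠ ρ in 𝓝 ρ₀, ∀ s ∈ valueSet X N V W 𝒰 A ρ, s < c := by
  -- `(z, v, u, Θ)` with `u = v + ρ • w` ranges over a compact set independent of `ρ`
  let K := N ×ˢ V ×ˢ X ×ˢ 𝒰
  let f : (ι → ℝ) × (ι → ℝ) × (ι → ℝ) × Matrix κ κ ℝ → ℝ :=
    fun p ↦ objective A p.2.2.2 (p.2.2.1 - p.1)
  have hK : IsCompact K :=
    (hXcomp.of_isClosed_subset hNclosed hNX).prod (hVcomp.prod (hXcomp.prod h𝒰comp))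
  have hf : ContinuousOn f K := fun p hp ↦
    ((continuousAt_objective (h𝒰pd _ hp.2.2.2) _).comp
      (f := fun p : (ι → ℝ) × (ι → ℝ) × (ι → ℝ) × Matrix κ κ ℝ ↦ (p.2.2.2, p.2.2.1 - p.1))
      (by fun_prop)).continuousWithinAt
  have hK' : IsCompact (K ∩ f ⁻¹' Ici c) :=
    hK.of_isClosed_subset (hf.preimage_isClosed_of_isClosed hK.isClosed isClosed_Ici)
      inter_subset_left
  have hfar : ∀ p ∈ K ∩ f ⁻¹' Ici c,
      ∀ᶠ q : ℝ × _ in 𝓝 (ρ₀, p), q.1⁻¹ • (q.2.2.2.1 - q.2.2.1) ∉ W := by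
    rintro ⟨z, v, u, Θ⟩ ⟨⟨hz, hv, hu, hΘ⟩, hfc⟩
    have hW : ρ₀⁻¹ • (u - v) ∉ W := fun hw ↦ (hc _
      ⟨z, hz, v, hv, _, hw, by rwa [smul_inv_smul₀ hρ₀, add_sub_cancel], Θ, hΘ,
        by rw [smul_inv_smul₀ hρ₀, add_sub_cancel]⟩).not_ge hfc
    have : ContinuousAt (fun q : ℝ × (ι → ℝ) × (ι → ℝ) × (ι → ℝ) × Matrix κ κ ℝ ↦
        q.1⁻¹ • (q.2.2.2.1 - q.2.2.1)) (ρ₀, z, v, u, Θ) := by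
      fun_prop (disch := exact hρ₀)
    exact this.eventually_mem (hWclosed.isOpen_compl.mem_nhds hW)
  filter_upwards [hK'.eventually_forall_of_forall_eventually
      (P := fun ρ p ↦ ρ⁻¹ • (p.2.2.1 - p.2.1) ∉ W) hfar, eventually_ne_nhds hρ₀]
    with ρ hρ hρ0
  rintro _ ⟨z, hz, v, hv, w, hw, hX, Θ, hΘ, rfl⟩
  by_contra! hle
  refine hρ (z, v, v + ρ • w, Θ) ⟨⟨hz, hv, hX, hΘ⟩, hle⟩ ?_
  simpa [hρ0] using hw

variable {R : ℝ}

lemma antitoneOn_sSup_valueSet (hWsc : ∀ w ∈ W, ∀ ρ : ℝ, 1 ≤ ρ → ρ • w ∈ W)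
    (h𝒰pd : ∀ Θ ∈ 𝒰, Θ.PosDef) (hne : ∀ ρ ∈ Ioc 0 R, (valueSet X N V W 𝒰 A ρ).Nonempty) :
    AntitoneOn (fun ρ ↦ sSup (valueSet X N V W 𝒰 A ρ)) (Ioc 0 R) := fun _ hρ₁ _ hρ₂ h ↦
  csSup_le_csSup (bddAbove_valueSet h𝒰pd _) (hne _ hρ₂) (valueSet_subset_of_le hWsc hρ₁.1 h)

lemma concaveOn_sSup_valueSet (hXconv : Convex ℝ X) (hNconv : Convex ℝ N)
    (hVconv : Convex ℝ V) (hWconv : Convex ℝ W) (h𝒰conv : Convex ℝ 𝒰)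
    (h𝒰pd : ∀ Θ ∈ 𝒰, Θ.PosDef) (hne : ∀ ρ ∈ Ioc 0 R, (valueSet X N V W 𝒰 A ρ).Nonempty) :
    ConcaveOn ℝ (Ioc 0 R) (fun ρ ↦ sSup (valueSet X N V W 𝒰 A ρ)) :=
  concaveOn_sSup_of_forall_exists_le (convex_Ioc 0 R) hne (fun ρ _ ↦ bddAbove_valueSet h𝒰pd ρ)
    fun _ hρ₁ _ hρ₂ _ _ ha hb hab _ hp _ hq ↦ exists_mem_valueSet_combo_le hXconv hNconv hVconv
      hWconv h𝒰conv h𝒰pd hρ₁.1 hρ₂.1 ha hb hab hp hq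

lemma upperSemicontinuousWithinAt_sSup_valueSet (hXcomp : IsCompact X) (hNX : N ⊆ X)
    (hNclosed : IsClosed N) (hVcomp : IsCompact V) (hWclosed : IsClosed W)
    (h𝒰comp : IsCompact 𝒰) (h𝒰pd : ∀ Θ ∈ 𝒰, Θ.PosDef) {s : Set ℝ}
    (hne : ∀ ρ ∈ s, (valueSet X N V W 𝒰 A ρ).Nonempty) {ρ₀ : ℝ} (hρ₀ : ρ₀ ≠ 0) :
    UpperSemicontinuousWithinAt (fun ρ ↦ sSup (valueSet X N V W 𝒰 A ρ)) s ρ₀ := by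
  intro c hc
  obtain ⟨c', hc', hc'c⟩ := exists_between hc
  have hρ₀c' : ∀ r ∈ valueSet X N V W 𝒰 A ρ₀, r < c' := fun r hr ↦
    (le_csSup (bddAbove_valueSet h𝒰pd ρ₀) hr).trans_lt hc'
  filter_upwards [nhdsWithin_le_nhds (eventually_forall_mem_valueSet_lt hXcomp hNX hNclosed
    hVcomp hWclosed h𝒰comp h𝒰pd hρ₀ hρ₀c'), self_mem_nhdsWithin] with ρ hρ hρs
  exact (csSup_le (hne ρ hρs) fun r hr ↦ (hρ r hr).le).trans_lt hc'c

lemma tendsto_sSup_valueSet_zero (hXconv : Convex ℝ X) (hNconv : Convex ℝ N)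
    (hVconv : Convex ℝ V) (hX0 : (0 : ι → ℝ) ∈ X) (hN0 : (0 : ι → ℝ) ∈ N)
    (hV0 : (0 : ι → ℝ) ∈ V) (h𝒰pd : ∀ Θ ∈ 𝒰, Θ.PosDef) (hR : 0 < R)
    (hne : ∀ ρ ∈ Ioc 0 R, (valueSet X N V W 𝒰 A ρ).Nonempty) :
    Tendsto (fun ρ ↦ sSup (valueSet X N V W 𝒰 A ρ)) (𝓝[Ioc 0 R] 0) (𝓝 0) := by
  obtain ⟨s, hs⟩ := hne R ⟨hR, le_rfl⟩
  have hlow : ∀ ρ ∈ Ioc 0 R, (ρ / R) ^ 2 * s ≤ sSup (valueSet X N V W 𝒰 A ρ) := by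
    intro ρ hρ
    have := sq_mul_mem_valueSet hXconv hNconv hVconv hX0 hN0 hV0 (div_pos hρ.1 hR).le
      ((div_le_one hR).2 hρ.2) hs
    rw [div_mul_cancel₀ _ hR.ne'] at this
    exact le_csSup (bddAbove_valueSet h𝒰pd ρ) this
  have hlim : Tendsto (fun ρ ↦ (ρ / R) ^ 2 * s) (𝓝[Ioc 0 R] 0) (𝓝 0) :=
    ((by fun_prop : Continuous fun ρ ↦ (ρ / R) ^ 2 * s).tendsto' 0 0 (by simp)).mono_left
      nhdsWithin_le_nhds
  exact tendsto_of_tendsto_of_tendsto_of_le_of_le' hlim tendsto_const_nhds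
    (eventually_nhdsWithin_of_forall hlow) (eventually_nhdsWithin_of_forall fun ρ hρ ↦
      csSup_le (hne ρ hρ) (valueSet_subset_Iic h𝒰pd ρ))

end ValueSet

theorem stmt2_general {n ν : ℕ}
    (X N V W : Set (Fin n → ℝ))
    (hXconv : Convex ℝ X) (hXcomp : IsCompact X)
    (hNX : N ⊆ X) (hNclosed : IsClosed N) (hNconv : Convex ℝ N)
    (hN0 : (0 : Fin n → ℝ) ∈ N)
    (hVX : V ⊆ X) (hVcomp : IsCompact V) (hVconv : Convex ℝ V)
    (hV0 : (0 : Fin n → ℝ) ∈ V)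
    (hWclosed : IsClosed W) (hWconv : Convex ℝ W)
    (hWsc : ∀ w ∈ W, ∀ ρ : ℝ, 1 ≤ ρ → ρ • w ∈ W)
    (𝒰 : Set (Matrix (Fin ν) (Fin ν) ℝ)) (h𝒰ne : 𝒰.Nonempty) (h𝒰comp : IsCompact 𝒰)
    (h𝒰conv : Convex ℝ 𝒰) (h𝒰pd : ∀ Θ ∈ 𝒰, Θ.PosDef)
    (A : Matrix (Fin ν) (Fin n) ℝ) (R : ℝ) (hR : 0 < R)
    (hF : ∀ ρ ∈ Set.Ioc (0:ℝ) R, ∃ z ∈ N, ∃ v ∈ V, ∃ w ∈ W, v + ρ • w ∈ X)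
    (SV : ℝ → ℝ)
    (hSV : ∀ ρ ∈ Set.Ioc (0:ℝ) R, SV ρ =
      sSup {s : ℝ | ∃ z ∈ N, ∃ v ∈ V, ∃ w ∈ W, v + ρ • w ∈ X ∧ ∃ Θ ∈ 𝒰,
        s = -(1/8) * ((A *ᵥ (v + ρ • w - z)) ⬝ᵥ (Θ⁻¹ *ᵥ (A *ᵥ (v + ρ • w - z))))}) :
    (∀ ρ ∈ Set.Ioc (0:ℝ) R, SV ρ ≤ 0) ∧
    AntitoneOn SV (Set.Ioc 0 R) ∧
    ConcaveOn ℝ (Set.Ioc 0 R) SV ∧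
    ContinuousOn SV (Set.Ioc 0 R) ∧
    Filter.Tendsto SV (nhdsWithin 0 (Set.Ioc 0 R)) (nhds 0) := by
  let g := fun ρ ↦ sSup (valueSet X N V W 𝒰 A ρ)
  have hgSV : EqOn g SV (Ioc 0 R) := fun ρ hρ ↦ (hSV ρ hρ).symm
  have hne : ∀ ρ ∈ Ioc 0 R, (valueSet X N V W 𝒰 A ρ).Nonempty := fun ρ hρ ↦ by
    obtain ⟨z, hz, v, hv, w, hw, hX⟩ := hF ρ hρ
    obtain ⟨Θ, hΘ⟩ := h𝒰ne
    exact ⟨_, z, hz, v, hv, w, hw, hX, Θ, hΘ, rfl⟩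
  have hanti : AntitoneOn g (Ioc 0 R) := antitoneOn_sSup_valueSet hWsc h𝒰pd hne
  have hconc : ConcaveOn ℝ (Ioc 0 R) g :=
    concaveOn_sSup_valueSet hXconv hNconv hVconv hWconv h𝒰conv h𝒰pd hne
  have hcontR : ContinuousWithinAt g (Ioc 0 R) R := hanti.continuousWithinAt_Ioc_right hR
    (upperSemicontinuousWithinAt_sSup_valueSet hXcomp hNX hNclosed hVcomp hWclosed h𝒰comp
      h𝒰pd hne hR.ne')
  refine ⟨fun ρ hρ ↦ hgSV hρ ▸ csSup_le (hne ρ hρ) (valueSet_subset_Iic h𝒰pd ρ),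
    fun _ hρ₁ _ hρ₂ h ↦ hgSV hρ₁ ▸ hgSV hρ₂ ▸ hanti hρ₁ hρ₂ h, hconc.congr hgSV,
    (hconc.continuousOn_Ioc ((continuousWithinAt_Ioc_iff_Iic hR).1 hcontR)).congr hgSV.symm,
    (tendsto_sSup_valueSet_zero hXconv hNconv hVconv (hVX hV0) hN0 hV0 h𝒰pd hR hne).congr' ?_⟩
  exact eventually_nhdsWithin_of_forall hgSV

theorem stmt2 {n ν : ℕ}
    (X N V W : Set (Fin n → ℝ))
    (hXconv : Convex ℝ X) (hXcomp : IsCompact X)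
    (hNX : N ⊆ X) (hNclosed : IsClosed N) (hNconv : Convex ℝ N)
    (hN0 : (0 : Fin n → ℝ) ∈ N)
    (hVX : V ⊆ X) (hVne : V.Nonempty) (hVcomp : IsCompact V) (hVconv : Convex ℝ V)
    (hV0 : (0 : Fin n → ℝ) ∈ V)
    (hWne : W.Nonempty) (hWclosed : IsClosed W) (hWconv : Convex ℝ W)
    (hW0 : (0 : Fin n → ℝ) ∉ W)
    (hWsc : ∀ w ∈ W, ∀ ρ : ℝ, 1 ≤ ρ → ρ • w ∈ W)
    (𝒰 : Set (Matrix (Fin ν) (Fin ν) ℝ)) (h𝒰ne : 𝒰.Nonempty) (h𝒰comp : IsCompact 𝒰)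
    (h𝒰conv : Convex ℝ 𝒰) (h𝒰pd : ∀ Θ ∈ 𝒰, Θ.PosDef)
    (A : Matrix (Fin ν) (Fin n) ℝ) (R : ℝ) (hR : 0 < R)
    (hF : ∀ ρ ∈ Set.Ioc (0:ℝ) R, ∃ z ∈ N, ∃ v ∈ V, ∃ w ∈ W, v + ρ • w ∈ X)
    (SV : ℝ → ℝ)
    (hSV : ∀ ρ ∈ Set.Ioc (0:ℝ) R, SV ρ =
      sSup {s : ℝ | ∃ z ∈ N, ∃ v ∈ V, ∃ w ∈ W, v + ρ • w ∈ X ∧ ∃ Θ ∈ 𝒰,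
        s = -(1/8) * ((A *ᵥ (v + ρ • w - z)) ⬝ᵥ (Θ⁻¹ *ᵥ (A *ᵥ (v + ρ • w - z))))}) :
    (∀ ρ ∈ Set.Ioc (0:ℝ) R, SV ρ ≤ 0) ∧
    AntitoneOn SV (Set.Ioc 0 R) ∧
    ConcaveOn ℝ (Set.Ioc 0 R) SV ∧
    ContinuousOn SV (Set.Ioc 0 R) ∧
    Filter.Tendsto SV (nhdsWithin 0 (Set.Ioc 0 R)) (nhds 0) :=
  stmt2_general X N V W hXconv hXcomp hNX hNclosed hNconv hN0 hVX hVcomp hVconv hV0 hWclosed hWconv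
    hWsc 𝒰 h𝒰ne h𝒰comp h𝒰conv h𝒰pd A R hR hF SV hSV
end

section
/- Let X ⊂ ℝⁿ be a compact convex set, N ⊆ X a closed convex set with 0 ∈ N, V ⊆ X a nonempty compact convex set with 0 ∈ V, and W ⊂ ℝⁿ a nonempty closed convex set with 0 ∉ W which is semi-conic (w ∈ W and ρ ≥ 1 imply ρw ∈ W). Let H be a real m×n matrix and R > 0 such that for every ρ ∈ (0, R] the set F(ρ) = {(z, v, w) : z ∈ N, v ∈ V, w ∈ W, v + ρw ∈ X} is nonempty. Define, for ρ ∈ (0, R], Γ(ρ) = min over (z, v, w) ∈ F(ρ) of ‖H(v + ρw − z)‖₂. Then Γ is a nonnegative, nondecreasing, continuous and convex function on (0, R] with lim_{ρ→0+} Γ(ρ) = 0. -/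
/-!
Write `Γ ρ` as the infimum of `g (v + ρ • w - z)` over the triples feasible at `ρ`, where
`g = ‖H ·‖₂` is nonnegative, convex and continuous. Semi-conicity of `W` turns a triple feasible
at `ρ₂` into one feasible at any `ρ₁ ∈ (0, ρ₂]` with the same residual, so `Γ` is nondecreasing.
Combining triples feasible at `x` and `y` with weights `a, b` (and the directions with weights
`a x / ρ, b y / ρ`, where `ρ = a x + b y`) gives a triple feasible at `ρ`, so `Γ` is convex and
hence continuous on `(0, R)`. Shrinking a triple feasible at `R` towards `0` by `t = ρ / R` bounds
`Γ ρ` by `g (t • p) → 0`. At `R`, monotonicity reduces continuity to lower semicontinuity, which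
holds because the `ρ ∈ [R/2, R]` admitting a triple with residual `≤ c` form the projection of a
compact set.
-/

open Matrix Set Filter Topology

section Algebraic

variable {E : Type*} [AddCommGroup E] [Module ℝ E] (g : E → ℝ) (X N V W : Set E)

def residuals (ρ : ℝ) : Set ℝ :=
  {r | ∃ z ∈ N, ∃ v ∈ V, ∃ w ∈ W, v + ρ • w ∈ X ∧ r = g (v + ρ • w - z)}

noncomputable def infResidual (ρ : ℝ) : ℝ :=
  sInf (residuals g X N V W ρ)

variable {g X N V W}

theorem residuals_subset_of_le (hWsc : ∀ w ∈ W, ∀ ρ : ℝ, 1 ≤ ρ → ρ • w ∈ W) {ρ₁ ρ₂ : ℝ}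
    (hρ₁ : 0 < ρ₁) (hρ : ρ₁ ≤ ρ₂) : residuals g X N V W ρ₂ ⊆ residuals g X N V W ρ₁ := by
  rintro r ⟨z, hz, v, hv, w, hw, hx, rfl⟩
  have hscale : ρ₁ • (ρ₂ / ρ₁) • w = ρ₂ • w := by rw [smul_smul, mul_div_cancel₀ _ hρ₁.ne']
  refine ⟨z, hz, v, hv, (ρ₂ / ρ₁) • w, hWsc w hw _ ((one_le_div hρ₁).2 hρ), ?_, ?_⟩
  · rwa [hscale]
  · rw [hscale]

theorem residuals_nonempty (hWsc : ∀ w ∈ W, ∀ ρ : ℝ, 1 ≤ ρ → ρ • w ∈ W) {R ρ : ℝ}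
    (hne : (residuals g X N V W R).Nonempty) (hρ : ρ ∈ Ioc 0 R) :
    (residuals g X N V W ρ).Nonempty :=
  hne.mono (residuals_subset_of_le hWsc hρ.1 hρ.2)

theorem bddBelow_residuals (hg_nonneg : ∀ x, 0 ≤ g x) (ρ : ℝ) :
    BddBelow (residuals g X N V W ρ) :=
  ⟨0, by rintro r ⟨z, -, v, -, w, -, -, rfl⟩; exact hg_nonneg _⟩

theorem infResidual_nonneg (hg_nonneg : ∀ x, 0 ≤ g x) (ρ : ℝ) : 0 ≤ infResidual g X N V W ρ :=
  Real.sInf_nonneg (by rintro r ⟨z, -, v, -, w, -, -, rfl⟩; exact hg_nonneg _)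

theorem monotoneOn_infResidual (hg_nonneg : ∀ x, 0 ≤ g x)
    (hWsc : ∀ w ∈ W, ∀ ρ : ℝ, 1 ≤ ρ → ρ • w ∈ W) {R : ℝ}
    (hne : (residuals g X N V W R).Nonempty) :
    MonotoneOn (infResidual g X N V W) (Ioc 0 R) := fun _ ha _ hb hab =>
  csInf_le_csInf (bddBelow_residuals hg_nonneg _) (residuals_nonempty hWsc hne hb)
    (residuals_subset_of_le hWsc ha.1 hab)

theorem infResidual_mul_le (hg_nonneg : ∀ x, 0 ≤ g x) (hX : Convex ℝ X) (hN : Convex ℝ N)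
    (hV : Convex ℝ V) (h0X : 0 ∈ X) (h0N : 0 ∈ N) (h0V : 0 ∈ V) {R : ℝ} {z v w : E}
    (hz : z ∈ N) (hv : v ∈ V) (hw : w ∈ W) (hx : v + R • w ∈ X) {t : ℝ} (ht : t ∈ Icc 0 1) :
    infResidual g X N V W (t * R) ≤ g (t • (v + R • w - z)) := by
  have hshift : t • v + (t * R) • w = t • (v + R • w) := by rw [smul_add, mul_smul]
  refine csInf_le (bddBelow_residuals hg_nonneg _) ⟨t • z, hN.smul_mem_of_zero_mem h0N hz ht,
    t • v, hV.smul_mem_of_zero_mem h0V hv ht, w, hw, ?_, ?_⟩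
  · rw [hshift]
    exact hX.smul_mem_of_zero_mem h0X hx ht
  · rw [hshift, smul_sub]

theorem exists_mem_residuals_le_convex_comb (hg_conv : ConvexOn ℝ univ g) (hX : Convex ℝ X)
    (hN : Convex ℝ N) (hV : Convex ℝ V) (hW : Convex ℝ W) {x y a b r₁ r₂ : ℝ} (hx : 0 < x)
    (hy : 0 < y) (ha : 0 ≤ a) (hb : 0 ≤ b) (hab : a + b = 1) (h₁ : r₁ ∈ residuals g X N V W x)
    (h₂ : r₂ ∈ residuals g X N V W y) :
    ∃ r ∈ residuals g X N V W (a * x + b * y), r ≤ a * r₁ + b * r₂ := by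
  obtain ⟨z₁, hz₁, v₁, hv₁, w₁, hw₁, hx₁, rfl⟩ := h₁
  obtain ⟨z₂, hz₂, v₂, hv₂, w₂, hw₂, hx₂, rfl⟩ := h₂
  set ρ := a * x + b * y
  have hρ : 0 < ρ := convex_Ioi (0 : ℝ) hx hy ha hb hab
  have hcomb : (a • v₁ + b • v₂) + ρ • ((a * x / ρ) • w₁ + (b * y / ρ) • w₂)
      = a • (v₁ + x • w₁) + b • (v₂ + y • w₂) := by
    rw [smul_add, smul_smul, smul_smul, mul_div_cancel₀ _ hρ.ne', mul_div_cancel₀ _ hρ.ne']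
    module
  have hsum : a * x / ρ + b * y / ρ = 1 := by rw [← add_div, div_self hρ.ne']
  refine ⟨_, ⟨a • z₁ + b • z₂, hN hz₁ hz₂ ha hb hab, a • v₁ + b • v₂, hV hv₁ hv₂ ha hb hab,
    _, hW hw₁ hw₂ (by positivity) (by positivity) hsum, ?_, rfl⟩, ?_⟩
  · rw [hcomb]
    exact hX hx₁ hx₂ ha hb hab
  · have hsplit : a • (v₁ + x • w₁) + b • (v₂ + y • w₂) - (a • z₁ + b • z₂)
        = a • (v₁ + x • w₁ - z₁) + b • (v₂ + y • w₂ - z₂) := by module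
    rw [hcomb, hsplit]
    exact hg_conv.2 (mem_univ _) (mem_univ _) ha hb hab

theorem convexOn_infResidual (hg_nonneg : ∀ x, 0 ≤ g x) (hg_conv : ConvexOn ℝ univ g)
    (hX : Convex ℝ X) (hN : Convex ℝ N) (hV : Convex ℝ V) (hW : Convex ℝ W)
    (hWsc : ∀ w ∈ W, ∀ ρ : ℝ, 1 ≤ ρ → ρ • w ∈ W) {R : ℝ}
    (hne : (residuals g X N V W R).Nonempty) :
    ConvexOn ℝ (Ioc 0 R) (infResidual g X N V W) := by
  refine ⟨convex_Ioc 0 R, fun x hx y hy a b ha hb hab => ?_⟩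
  simp only [smul_eq_mul]
  refine le_of_forall_pos_le_add fun ε hε => ?_
  obtain ⟨r₁, hr₁, hr₁ε⟩ := Real.lt_sInf_add_pos (residuals_nonempty hWsc hne hx) hε
  obtain ⟨r₂, hr₂, hr₂ε⟩ := Real.lt_sInf_add_pos (residuals_nonempty hWsc hne hy) hε
  obtain ⟨r, hr, hrle⟩ :=
    exists_mem_residuals_le_convex_comb hg_conv hX hN hV hW hx.1 hy.1 ha hb hab hr₁ hr₂
  calc infResidual g X N V W (a * x + b * y) ≤ r := csInf_le (bddBelow_residuals hg_nonneg _) hr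
    _ ≤ a * r₁ + b * r₂ := hrle
    _ ≤ a * (infResidual g X N V W x + ε) + b * (infResidual g X N V W y + ε) := by
      gcongr
      exacts [hr₁ε.le, hr₂ε.le]
    _ = a * infResidual g X N V W x + b * infResidual g X N V W y + ε := by
      linear_combination ε * hab

end Algebraic

section Topological

variable {E : Type*} [AddCommGroup E] [Module ℝ E] [TopologicalSpace E] [ContinuousSMul ℝ E]
  {g : E → ℝ} {X N V W : Set E}

theorem tendsto_infResidual_zero (hg_nonneg : ∀ x, 0 ≤ g x) (hg_cont : ContinuousAt g 0)
    (hg0 : g 0 = 0) (hX : Convex ℝ X) (hN : Convex ℝ N) (hV : Convex ℝ V) (h0X : 0 ∈ X)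
    (h0N : 0 ∈ N) (h0V : 0 ∈ V) {R : ℝ} (hR : 0 < R) (hne : (residuals g X N V W R).Nonempty) :
    Tendsto (infResidual g X N V W) (𝓝[Ioc 0 R] 0) (𝓝 0) := by
  obtain ⟨-, z, hz, v, hv, w, hw, hx, -⟩ := hne
  have hscale : Tendsto (fun ρ : ℝ => (ρ / R) • (v + R • w - z)) (𝓝 0) (𝓝 0) := by
    have hcont : Continuous fun ρ : ℝ => (ρ / R) • (v + R • w - z) := by fun_prop
    simpa using hcont.tendsto 0
  have hupper : Tendsto (fun ρ : ℝ => g ((ρ / R) • (v + R • w - z))) (𝓝[Ioc 0 R] 0) (𝓝 0) := by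
    have hlim := hg_cont.tendsto.comp hscale
    rw [hg0] at hlim
    exact hlim.mono_left nhdsWithin_le_nhds
  refine tendsto_of_tendsto_of_tendsto_of_le_of_le' tendsto_const_nhds hupper
    (Eventually.of_forall fun ρ => infResidual_nonneg hg_nonneg ρ) ?_
  filter_upwards [self_mem_nhdsWithin] with ρ hρ
  have ht : ρ / R ∈ Icc (0 : ℝ) 1 := ⟨div_nonneg hρ.1.le hR.le, (div_le_one hR).2 hρ.2⟩
  simpa [div_mul_cancel₀ ρ hR.ne'] using
    infResidual_mul_le hg_nonneg hX hN hV h0X h0N h0V hz hv hw hx ht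

variable [IsTopologicalAddGroup E] [T2Space E]

-- recover the direction from the endpoint as `w = ρ⁻¹ • (x - v)`, continuous for `ρ > 0`
theorem isClosed_setOf_exists_residuals_le (hg_cont : Continuous g) (hX : IsCompact X) (hNX : N ⊆ X)
    (hN : IsClosed N) (hV : IsCompact V) (hW : IsClosed W) {a b : ℝ} (ha : 0 < a) (c : ℝ) :
    IsClosed {ρ ∈ Icc a b | ∃ r ∈ residuals g X N V W ρ, r ≤ c} := by
  set base : Set (ℝ × E × E × E) := Icc a b ×ˢ N ×ˢ V ×ˢ X
  have hbase : IsCompact base :=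
    isCompact_Icc.prod ((hX.of_isClosed_subset hN hNX).prod (hV.prod hX))
  have hdir : ContinuousOn (fun q : ℝ × E × E × E => q.1⁻¹ • (q.2.2.2 - q.2.2.1)) base :=
    (continuousOn_fst.inv₀ fun q hq => (ha.trans_le hq.1.1).ne').smul (by fun_prop)
  set K := (base ∩ (fun q : ℝ × E × E × E => q.1⁻¹ • (q.2.2.2 - q.2.2.1)) ⁻¹' W) ∩
    {q | g (q.2.2.2 - q.2.1) ≤ c}
  have hK : IsCompact K :=
    (hbase.of_isClosed_subset (hdir.preimage_isClosed_of_isClosed hbase.isClosed hW)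
      inter_subset_left).inter_right (isClosed_le (by fun_prop) continuous_const)
  suffices Prod.fst '' K = {ρ ∈ Icc a b | ∃ r ∈ residuals g X N V W ρ, r ≤ c} from
    this ▸ (hK.image continuous_fst).isClosed
  ext ρ
  constructor
  · rintro ⟨⟨ρ, z, v, x⟩, ⟨⟨⟨hρ, hz, hv, hx⟩, hw⟩, hc⟩, rfl⟩
    have hρ0 : ρ ≠ 0 := (ha.trans_le hρ.1).ne'
    have hxv : v + ρ • ρ⁻¹ • (x - v) = x := by
      rw [smul_smul, mul_inv_cancel₀ hρ0, one_smul, add_sub_cancel]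
    exact ⟨hρ, g (x - z), ⟨z, hz, v, hv, _, hw, by rwa [hxv], by rw [hxv]⟩, hc⟩
  · rintro ⟨hρ, _, ⟨z, hz, v, hv, w, hw, hx, rfl⟩, hc⟩
    have hρ0 : ρ ≠ 0 := (ha.trans_le hρ.1).ne'
    refine ⟨⟨ρ, z, v, v + ρ • w⟩, ⟨⟨⟨hρ, hz, hv, hx⟩, ?_⟩, hc⟩, rfl⟩
    simpa [smul_smul, inv_mul_cancel₀ hρ0] using hw

theorem exists_lt_infResidual (hg_nonneg : ∀ x, 0 ≤ g x) (hg_cont : Continuous g)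
    (hX : IsCompact X) (hNX : N ⊆ X) (hN : IsClosed N) (hV : IsCompact V) (hW : IsClosed W)
    (hWsc : ∀ w ∈ W, ∀ ρ : ℝ, 1 ≤ ρ → ρ • w ∈ W) {R : ℝ} (hR : 0 < R)
    (hne : (residuals g X N V W R).Nonempty) {c : ℝ} (hc : c < infResidual g X N V W R) :
    ∃ ρ ∈ Ioo 0 R, c < infResidual g X N V W ρ := by
  by_contra! hle
  obtain ⟨c', hcc', hc'R⟩ := exists_between hc
  have hsub : Ico (R / 2) R ⊆ {ρ ∈ Icc (R / 2) R | ∃ r ∈ residuals g X N V W ρ, r ≤ c'} :=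
    fun ρ hρ => by
      have hρ' : ρ ∈ Ioc 0 R := ⟨by linarith [hρ.1], hρ.2.le⟩
      obtain ⟨r, hr, hrc⟩ := exists_lt_of_csInf_lt (residuals_nonempty hWsc hne hρ')
        ((hle ρ ⟨hρ'.1, hρ.2⟩).trans_lt hcc')
      exact ⟨Ico_subset_Icc_self hρ, r, hr, hrc.le⟩
  have hRmem := closure_minimal hsub
    (isClosed_setOf_exists_residuals_le hg_cont hX hNX hN hV hW (half_pos hR) c')
  rw [closure_Ico (by linarith)] at hRmem
  obtain ⟨-, r, hr, hrc⟩ := hRmem (right_mem_Icc.2 (by linarith))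
  exact (csInf_le (bddBelow_residuals hg_nonneg R) hr |>.trans hrc).not_gt hc'R

theorem continuousWithinAt_infResidual_right (hg_nonneg : ∀ x, 0 ≤ g x) (hg_cont : Continuous g)
    (hX : IsCompact X) (hNX : N ⊆ X) (hN : IsClosed N) (hV : IsCompact V) (hW : IsClosed W)
    (hWsc : ∀ w ∈ W, ∀ ρ : ℝ, 1 ≤ ρ → ρ • w ∈ W) {R : ℝ} (hR : 0 < R)
    (hne : (residuals g X N V W R).Nonempty) :
    ContinuousWithinAt (infResidual g X N V W) (Ioc 0 R) R := by
  have hmono := monotoneOn_infResidual hg_nonneg hWsc hne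
  refine tendsto_order.2 ⟨fun c hc => ?_, fun c hc => ?_⟩
  · obtain ⟨ρ₀, hρ₀, hcρ₀⟩ :=
      exists_lt_infResidual hg_nonneg hg_cont hX hNX hN hV hW hWsc hR hne hc
    filter_upwards [self_mem_nhdsWithin, nhdsWithin_le_nhds (Ioi_mem_nhds hρ₀.2)] with ρ hρ hρ₀ρ
    exact hcρ₀.trans_le (hmono ⟨hρ₀.1, hρ₀.2.le⟩ hρ (le_of_lt hρ₀ρ))
  · filter_upwards [self_mem_nhdsWithin] with ρ hρ
    exact (hmono hρ ⟨hR, le_rfl⟩ hρ.2).trans_lt hc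

end Topological

theorem convexOn_sqrt_sum_sq_mulVec {ι κ : Type*} [Fintype ι] [Fintype κ] (H : Matrix κ ι ℝ) :
    ConvexOn ℝ univ fun x => √(∑ i, (H *ᵥ x) i ^ 2) := by
  refine ((convexOn_norm convex_univ).comp_linearMap
    ((WithLp.linearEquiv 2 ℝ (κ → ℝ)).symm.toLinearMap ∘ₗ H.mulVecLin)).congr fun x _ => ?_
  simp [EuclideanSpace.norm_eq]

theorem stmt3_general {n m : ℕ}
    (X N V W : Set (Fin n → ℝ))
    (hXconv : Convex ℝ X) (hXcomp : IsCompact X)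
    (hNX : N ⊆ X) (hNclosed : IsClosed N) (hNconv : Convex ℝ N)
    (hN0 : (0 : Fin n → ℝ) ∈ N)
    (hVX : V ⊆ X) (hVcomp : IsCompact V) (hVconv : Convex ℝ V)
    (hV0 : (0 : Fin n → ℝ) ∈ V)
    (hWclosed : IsClosed W) (hWconv : Convex ℝ W)
    (hWsc : ∀ w ∈ W, ∀ ρ : ℝ, 1 ≤ ρ → ρ • w ∈ W)
    (H : Matrix (Fin m) (Fin n) ℝ) (R : ℝ) (hR : 0 < R)
    (hF : ∀ ρ ∈ Set.Ioc (0:ℝ) R, ∃ z ∈ N, ∃ v ∈ V, ∃ w ∈ W, v + ρ • w ∈ X)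
    (Γ : ℝ → ℝ)
    (hΓ : ∀ ρ ∈ Set.Ioc (0:ℝ) R, Γ ρ =
      sInf {r : ℝ | ∃ z ∈ N, ∃ v ∈ V, ∃ w ∈ W, v + ρ • w ∈ X ∧
        r = Real.sqrt (∑ i, ((H *ᵥ (v + ρ • w - z)) i)^2)}) :
    (∀ ρ ∈ Set.Ioc (0:ℝ) R, 0 ≤ Γ ρ) ∧
    MonotoneOn Γ (Set.Ioc 0 R) ∧
    ContinuousOn Γ (Set.Ioc 0 R) ∧
    ConvexOn ℝ (Set.Ioc 0 R) Γ ∧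
    Filter.Tendsto Γ (nhdsWithin 0 (Set.Ioc 0 R)) (nhds 0) := by
  set g : (Fin n → ℝ) → ℝ := fun x => √(∑ i, (H *ᵥ x) i ^ 2)
  have hΓg : EqOn (infResidual g X N V W) Γ (Ioc 0 R) := fun ρ hρ => (hΓ ρ hρ).symm
  have hg_nonneg : ∀ x, 0 ≤ g x := fun x => Real.sqrt_nonneg _
  have hg_cont : Continuous g := by fun_prop
  have hg_conv : ConvexOn ℝ univ g := convexOn_sqrt_sum_sq_mulVec H
  have hne : (residuals g X N V W R).Nonempty := by
    obtain ⟨z, hz, v, hv, w, hw, hx⟩ := hF R ⟨hR, le_rfl⟩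
    exact ⟨_, z, hz, v, hv, w, hw, hx, rfl⟩
  have hconv := convexOn_infResidual hg_nonneg hg_conv hXconv hNconv hVconv hWconv hWsc hne
  refine ⟨fun ρ hρ => hΓg hρ ▸ infResidual_nonneg hg_nonneg ρ,
    (monotoneOn_infResidual hg_nonneg hWsc hne).congr hΓg, ?_, hconv.congr hΓg, ?_⟩
  · have hR_cont := continuousWithinAt_infResidual_right hg_nonneg hg_cont hXcomp hNX hNclosed
      hVcomp hWclosed hWsc hR hne
    exact (hconv.continuousOn_Ioc ((continuousWithinAt_Ioc_iff_Iic hR).1 hR_cont)).congr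
      hΓg.symm
  · exact (tendsto_infResidual_zero hg_nonneg hg_cont.continuousAt (by simp [g]) hXconv hNconv
      hVconv (hVX hV0) hN0 hV0 hR hne).congr' (eventuallyEq_nhdsWithin_of_eqOn hΓg)

theorem stmt3 {n m : ℕ}
    (X N V W : Set (Fin n → ℝ))
    (hXconv : Convex ℝ X) (hXcomp : IsCompact X)
    (hNX : N ⊆ X) (hNclosed : IsClosed N) (hNconv : Convex ℝ N)
    (hN0 : (0 : Fin n → ℝ) ∈ N)
    (hVX : V ⊆ X) (hVne : V.Nonempty) (hVcomp : IsCompact V) (hVconv : Convex ℝ V)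
    (hV0 : (0 : Fin n → ℝ) ∈ V)
    (hWne : W.Nonempty) (hWclosed : IsClosed W) (hWconv : Convex ℝ W)
    (hW0 : (0 : Fin n → ℝ) ∉ W)
    (hWsc : ∀ w ∈ W, ∀ ρ : ℝ, 1 ≤ ρ → ρ • w ∈ W)
    (H : Matrix (Fin m) (Fin n) ℝ) (R : ℝ) (hR : 0 < R)
    (hF : ∀ ρ ∈ Set.Ioc (0:ℝ) R, ∃ z ∈ N, ∃ v ∈ V, ∃ w ∈ W, v + ρ • w ∈ X)
    (Γ : ℝ → ℝ)
    (hΓ : ∀ ρ ∈ Set.Ioc (0:ℝ) R, Γ ρ =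
      sInf {r : ℝ | ∃ z ∈ N, ∃ v ∈ V, ∃ w ∈ W, v + ρ • w ∈ X ∧
        r = Real.sqrt (∑ i, ((H *ᵥ (v + ρ • w - z)) i)^2)}) :
    (∀ ρ ∈ Set.Ioc (0:ℝ) R, 0 ≤ Γ ρ) ∧
    MonotoneOn Γ (Set.Ioc 0 R) ∧
    ContinuousOn Γ (Set.Ioc 0 R) ∧
    ConvexOn ℝ (Set.Ioc 0 R) Γ ∧
    Filter.Tendsto Γ (nhdsWithin 0 (Set.Ioc 0 R)) (nhds 0) :=
  stmt3_general X N V W hXconv hXcomp hNX hNclosed hNconv hN0 hVX hVcomp hVconv hV0 hWclosed hWconv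
    hWsc H R hR hF Γ hΓ
end

section
/- Let ε ∈ (0, 1/2), ε_t > 0, let L be a positive integer, and let δ > 0 satisfy δ ≥ ½(ErfInv(ε_t/L) + ErfInv(ε)). Set α = (δ/2)(ErfInv(ε) − ErfInv(ε_t/L)). Let Y be a random vector in ℝ^m on a probability space (Ω, ℱ, P) and let φ₁, …, φ_L : ℝ^m → ℝ be Borel functions. Then: (i) if for every k ∈ {1, …, L} and every real a ≤ δ² one has P(φ_k(Y) ≤ a) ≤ Erf(δ − a/δ), then P(∃ k ≤ L : φ_k(Y) < α) ≤ ε_t; (ii) if for some k ∈ {1, …, L} and every real b ≤ δ² one has P(φ_k(Y) ≥ −b) ≤ Erf(δ − b/δ), then P(φ_k(Y) ≥ α) ≤ ε. -/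
open MeasureTheory

/-- `Erf s = (1/√(2π)) ∫_s^∞ exp(−r²/2) dr`, the standard Gaussian upper tail. -/
noncomputable def Erf (s : ℝ) : ℝ :=
  (Real.sqrt (2 * Real.pi))⁻¹ * ∫ r in Set.Ioi s, Real.exp (-(r^2) / 2)

/-- `ErfInv κ = min {r ≥ 0 : Erf r ≤ κ}` for `0 ≤ κ ≤ 1/2`, and `0` for `κ ≥ 1/2`. -/
noncomputable def ErfInv (κ : ℝ) : ℝ :=
  if κ < 1/2 then sInf {r : ℝ | 0 ≤ r ∧ Erf r ≤ κ} else 0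

/-! Since `Erf` is antitone and `Erf (ErfInv κ) ≤ κ` for `κ > 0` (the infimum defining `ErfInv`
is attained, `Erf` being continuous and tending to `0`), the choice of `α` makes
`δ - α/δ ≥ ErfInv (εt/L)` and `δ + α/δ ≥ ErfInv ε`, both equivalent to the hypothesis on `δ`.
The hypotheses at `a = α`, resp. `b = -α`, then give the bounds `εt/L` and `ε`, and a union bound
over the `L` indices gives (i). -/

open Filter Topology intervalIntegral

lemma exp_neg_sq_div_two_eq (r : ℝ) : Real.exp (-(r^2) / 2) = Real.exp (-(1/2) * r^2) := by
  ring_nf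

lemma integrable_exp_neg_sq_div_two : Integrable fun r : ℝ => Real.exp (-(r^2) / 2) := by
  simpa only [exp_neg_sq_div_two_eq] using integrable_exp_neg_mul_sq (b := 1/2) (by norm_num)

lemma Erf_zero : Erf 0 = 1/2 := by
  have h : Real.pi / (1/2) = 2 * Real.pi := by ring
  simp only [Erf, exp_neg_sq_div_two_eq]
  rw [integral_gaussian_Ioi, h]
  have : 0 < Real.sqrt (2 * Real.pi) := by positivity
  field_simp

lemma Erf_eq_Erf_zero_sub (s : ℝ) :
    Erf s = Erf 0 - (Real.sqrt (2 * Real.pi))⁻¹ * ∫ r in 0..s, Real.exp (-(r^2) / 2) := by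
  rw [Erf, Erf, ← integral_interval_add_Ioi (a := 0) (b := s)
    integrable_exp_neg_sq_div_two.integrableOn integrable_exp_neg_sq_div_two.integrableOn]
  ring

lemma continuous_Erf : Continuous Erf := by
  rw [funext Erf_eq_Erf_zero_sub]
  exact continuous_const.sub <| continuous_const.mul <|
    continuous_primitive (fun _ _ => integrable_exp_neg_sq_div_two.intervalIntegrable) 0

lemma Erf_antitone : Antitone Erf := by
  intro s t hst
  have hmono : ∫ r in 0..s, Real.exp (-(r^2) / 2) ≤ ∫ r in 0..t, Real.exp (-(r^2) / 2) := by
    rw [← sub_nonneg, integral_interval_sub_left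
      integrable_exp_neg_sq_div_two.intervalIntegrable
      integrable_exp_neg_sq_div_two.intervalIntegrable]
    exact integral_nonneg hst fun r _ => (Real.exp_pos _).le
  rw [Erf_eq_Erf_zero_sub s, Erf_eq_Erf_zero_sub t]
  gcongr

lemma tendsto_Erf_atTop : Tendsto Erf atTop (𝓝 0) := by
  have hprim := intervalIntegral_tendsto_integral_Ioi 0
    integrable_exp_neg_sq_div_two.integrableOn tendsto_id
  have hlim := (hprim.const_mul (Real.sqrt (2 * Real.pi))⁻¹).const_sub (Erf 0)
  rw [← Erf, sub_self] at hlim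
  exact hlim.congr fun s => (Erf_eq_Erf_zero_sub s).symm

lemma ErfInv_nonneg (κ : ℝ) : 0 ≤ ErfInv κ := by
  unfold ErfInv
  split_ifs
  exacts [Real.sInf_nonneg fun _ hr => hr.1, le_rfl]

lemma Erf_ErfInv_le {κ : ℝ} (hκ : 0 < κ) : Erf (ErfInv κ) ≤ κ := by
  unfold ErfInv
  split_ifs with h
  · have hclosed : IsClosed {r : ℝ | 0 ≤ r ∧ Erf r ≤ κ} :=
      (isClosed_le continuous_const continuous_id).inter
        (isClosed_le continuous_Erf continuous_const)
    have hne : {r : ℝ | 0 ≤ r ∧ Erf r ≤ κ}.Nonempty := by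
      obtain ⟨r, hr, hr0⟩ :=
        ((tendsto_Erf_atTop.eventually_le_const hκ).and (eventually_ge_atTop 0)).exists
      exact ⟨r, hr0, hr⟩
    exact (hclosed.csInf_mem hne ⟨0, fun _ hr => hr.1⟩).2
  · rw [Erf_zero]
    linarith

lemma measure_iUnion_le_ofReal_of_le_div {α ι : Type*} [MeasurableSpace α] [Fintype ι]
    (μ : Measure α) (s : ι → Set α) {c : ℝ} (hc : 0 ≤ c)
    (h : ∀ i, μ (s i) ≤ ENNReal.ofReal (c / Fintype.card ι)) :
    μ (⋃ i, s i) ≤ ENNReal.ofReal c := by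
  have hcard : (Fintype.card ι : ℝ) * (c / Fintype.card ι) ≤ c := by
    rcases (Nat.cast_nonneg (Fintype.card ι) : (0 : ℝ) ≤ _).eq_or_lt with h0 | hpos
    · rw [← h0, zero_mul]; exact hc
    · rw [mul_div_cancel₀ _ hpos.ne']
  calc μ (⋃ i, s i) ≤ ∑ i, μ (s i) := measure_iUnion_fintype_le μ s
    _ ≤ Fintype.card ι • ENNReal.ofReal (c / Fintype.card ι) :=
        Finset.sum_le_card_nsmul _ _ _ fun i _ => h i
    _ = ENNReal.ofReal (Fintype.card ι * (c / Fintype.card ι)) := by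
        rw [nsmul_eq_mul, ENNReal.ofReal_mul (Nat.cast_nonneg _), ENNReal.ofReal_natCast]
    _ ≤ ENNReal.ofReal c := ENNReal.ofReal_le_ofReal hcard

lemma threshold_le_sq_and_Erf_le {κ v δ : ℝ} (hκ : 0 < κ) (hδ : 0 < δ)
    (h : (1/2) * (ErfInv κ + v) ≤ δ) :
    δ/2 * (v - ErfInv κ) ≤ δ^2 ∧ Erf (δ - δ/2 * (v - ErfInv κ) / δ) ≤ κ := by
  have hu := ErfInv_nonneg κ
  have hshift : δ - δ/2 * (v - ErfInv κ) / δ = δ - (v - ErfInv κ) / 2 := by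
    field_simp
  refine ⟨by nlinarith, ?_⟩
  rw [hshift]
  exact (Erf_antitone (by linarith)).trans (Erf_ErfInv_le hκ)

theorem stmt5_general {Ω : Type*} [MeasurableSpace Ω] (P : Measure Ω)
    (ε εt : ℝ) (hε : ε ∈ Set.Ioo 0 (1/2)) (hεt : 0 < εt)
    (L : ℕ)
    (δ : ℝ) (hδpos : 0 < δ) (hδ : (1/2) * (ErfInv (εt / L) + ErfInv ε) ≤ δ)
    (α : ℝ) (hα : α = (δ/2) * (ErfInv ε - ErfInv (εt / L)))
    {m : ℕ} (Y : Ω → (Fin m → ℝ))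
    (φ : Fin L → (Fin m → ℝ) → ℝ) :
    -- (i)
    ((∀ k, ∀ a : ℝ, a ≤ δ^2 →
        P {ω | φ k (Y ω) ≤ a} ≤ ENNReal.ofReal (Erf (δ - a/δ))) →
      P {ω | ∃ k, φ k (Y ω) < α} ≤ ENNReal.ofReal εt) ∧
    -- (ii)
    (∀ k, (∀ b : ℝ, b ≤ δ^2 →
        P {ω | -b ≤ φ k (Y ω)} ≤ ENNReal.ofReal (Erf (δ - b/δ))) →
      P {ω | α ≤ φ k (Y ω)} ≤ ENNReal.ofReal ε) := by
  refine ⟨fun h => ?_, fun k h => ?_⟩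
  · rw [Set.ofPred_exists]
    refine measure_iUnion_le_ofReal_of_le_div P _ hεt.le fun k => ?_
    obtain ⟨hαsq, hErf⟩ :=
      threshold_le_sq_and_Erf_le (div_pos hεt (Nat.cast_pos.2 k.pos)) hδpos hδ
    rw [← hα] at hαsq hErf
    calc P {ω | φ k (Y ω) < α} ≤ P {ω | φ k (Y ω) ≤ α} :=
          measure_mono (Set.ofPred_subset_ofPred.2 fun _ => le_of_lt)
      _ ≤ ENNReal.ofReal (Erf (δ - α/δ)) := h k α hαsq
      _ ≤ ENNReal.ofReal (εt / Fintype.card (Fin L)) := by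
        rw [Fintype.card_fin]; exact ENNReal.ofReal_le_ofReal hErf
  · -- swapping the two quantiles turns `α` into `-α`
    have hneg : -α = δ/2 * (ErfInv (εt / L) - ErfInv ε) := by rw [hα]; ring
    obtain ⟨hαsq, hErf⟩ :=
      threshold_le_sq_and_Erf_le (v := ErfInv (εt / L)) hε.1 hδpos (by linarith)
    rw [← hneg] at hαsq hErf
    calc P {ω | α ≤ φ k (Y ω)} = P {ω | -(-α) ≤ φ k (Y ω)} := by rw [neg_neg]
      _ ≤ ENNReal.ofReal (Erf (δ - -α/δ)) := h (-α) hαsq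
      _ ≤ ENNReal.ofReal ε := ENNReal.ofReal_le_ofReal hErf

theorem stmt5 {Ω : Type*} [MeasurableSpace Ω] (P : Measure Ω) [IsProbabilityMeasure P]
    (ε εt : ℝ) (hε : ε ∈ Set.Ioo 0 (1/2)) (hεt : 0 < εt)
    (L : ℕ) (hL : 1 ≤ L)
    (δ : ℝ) (hδpos : 0 < δ) (hδ : (1/2) * (ErfInv (εt / L) + ErfInv ε) ≤ δ)
    (α : ℝ) (hα : α = (δ/2) * (ErfInv ε - ErfInv (εt / L)))
    {m : ℕ} (Y : Ω → (Fin m → ℝ)) (hY : Measurable Y)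
    (φ : Fin L → (Fin m → ℝ) → ℝ) (hφ : ∀ k, Measurable (φ k)) :
    -- (i)
    ((∀ k, ∀ a : ℝ, a ≤ δ^2 →
        P {ω | φ k (Y ω) ≤ a} ≤ ENNReal.ofReal (Erf (δ - a/δ))) →
      P {ω | ∃ k, φ k (Y ω) < α} ≤ ENNReal.ofReal εt) ∧
    -- (ii)
    (∀ k, (∀ b : ℝ, b ≤ δ^2 →
        P {ω | -b ≤ φ k (Y ω)} ≤ ENNReal.ofReal (Erf (δ - b/δ))) →
      P {ω | α ≤ φ k (Y ω)} ≤ ENNReal.ofReal ε) :=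
  stmt5_general P ε εt hε hεt L δ hδpos hδ α hα Y φ
end

section
/- Let ν, n ≥ 1, let Θ* be a symmetric positive definite ν×ν matrix, let γ ∈ (0, 1), let 𝒵 be a nonempty compact set of symmetric positive semidefinite (n+1)×(n+1) matrices, and let B be a real (ν+1)×(n+1) matrix. Then the function Γ(h, H) = ½ max_{Z∈𝒵} Tr(Z · Bᵀ(Q(H,h) + [H,h]ᵀ((Θ*)⁻¹ − H)⁻¹[H,h])B) is convex and continuous on the set ℋ^γ = {(h, H) ∈ ℝ^ν × Sym(ν) : −γ(Θ*)⁻¹ ⪯ H ⪯ γ(Θ*)⁻¹}. -/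
open Matrix

/-- `[H, h]`, the `ν×(ν+1)` matrix whose first `ν` columns form `H` and last column is `h`. -/
noncomputable def HhMat {ν : ℕ} (H : Matrix (Fin ν) (Fin ν) ℝ) (h : Fin ν → ℝ) :
    Matrix (Fin ν) (Fin ν ⊕ Unit) ℝ :=
  Matrix.of fun i j => Sum.elim (fun j' => H i j') (fun _ => h i) j

/-- `Q(H,h)`, the symmetric `(ν+1)×(ν+1)` matrix with NW block `H`, last column/row `(h;0)`. -/
noncomputable def Qmat {ν : ℕ} (H : Matrix (Fin ν) (Fin ν) ℝ) (h : Fin ν → ℝ) :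
    Matrix (Fin ν ⊕ Unit) (Fin ν ⊕ Unit) ℝ :=
  Matrix.fromBlocks H (Matrix.of fun i (_ : Unit) => h i)
    (Matrix.of fun (_ : Unit) j => h j) 0

/-- `φ_𝒵(Y) = max_{Z ∈ 𝒵} Tr (Z Y)`, the support function of `𝒵`. -/
noncomputable def phiZ {n : ℕ} (𝒵 : Set (Matrix (Fin n ⊕ Unit) (Fin n ⊕ Unit) ℝ))
    (Y : Matrix (Fin n ⊕ Unit) (Fin n ⊕ Unit) ℝ) : ℝ :=
  sSup ((fun Z => (Z * Y).trace) '' 𝒵)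

/-!
Write `X = [H, h]` and `A = Θ⁻¹ - H`; both depend affinely on `(h, H)`, and `Γ` is
`½ φ_𝒵 (Bᵀ (Q(H,h) + Xᵀ A⁻¹ X) B)`. The map `(X, A) ↦ Xᵀ A⁻¹ X` is jointly convex for the
Loewner order on `A ≻ 0`: the block matrix `[[A, X], [Xᵀ, Xᵀ A⁻¹ X]]` is positive semidefinite,
a convex combination of such block matrices stays positive semidefinite, and its Schur complement
is the convexity defect. Since every `Z ∈ 𝒵` is positive semidefinite, `Y ↦ φ_𝒵 (Bᵀ Y B)` is
convex and Loewner-monotone, so the composite is convex. On `ℋ^γ` we have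
`Θ⁻¹ - H ⪰ (1 - γ) Θ⁻¹ ≻ 0`, so the inverse is continuous there, and `φ_𝒵` is continuous as a
maximum over a compact set.
-/

open Set

-- `≤`, `Monotone` and `ConvexOn` on square matrices refer to the Loewner order.
open scoped MatrixOrder

theorem ConvexOn.monotone_comp {𝕜 E β α : Type*} [Semiring 𝕜] [PartialOrder 𝕜]
    [AddCommMonoid E] [SMul 𝕜 E] [AddCommMonoid β] [PartialOrder β] [SMul 𝕜 β]
    [AddCommMonoid α] [PartialOrder α] [SMul 𝕜 α] {s : Set E} {f : E → β} {g : β → α}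
    (hg : ConvexOn 𝕜 univ g) (hg' : Monotone g) (hf : ConvexOn 𝕜 s f) : ConvexOn 𝕜 s (g ∘ f) :=
  ⟨hf.1, fun _ hx _ hy _ _ ha hb hab =>
    (hg' (hf.2 hx hy ha hb hab)).trans (hg.2 trivial trivial ha hb hab)⟩

namespace Matrix

variable {m k : Type*}

instance : PosSMulMono ℝ (Matrix m m ℝ) :=
  ⟨fun c hc A B hAB => by simpa [le_iff, ← smul_sub] using hAB.smul hc⟩

theorem PosSemidef.trace_mul_nonneg [Fintype m] {A B : Matrix m m ℝ} (hA : A.PosSemidef)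
    (hB : B.PosSemidef) : 0 ≤ (A * B).trace := by
  classical
  obtain ⟨C, rfl⟩ := CStarAlgebra.nonneg_iff_eq_star_mul_self.mp hB.nonneg
  rw [star_eq_conjTranspose, ← Matrix.mul_assoc, trace_mul_comm, ← Matrix.mul_assoc]
  exact (hA.mul_mul_conjTranspose_same C).trace_nonneg

theorem convex_setOf_posDef : Convex ℝ {A : Matrix m m ℝ | A.PosDef} := by
  intro A hA B hB a b ha hb hab
  rcases ha.eq_or_lt with rfl | ha
  · simpa [show b = 1 by linarith] using hB
  · exact (hA.smul ha).add_posSemidef (hB.posSemidef.smul hb)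

theorem posSemidef_fromBlocks_transpose_mul_inv_mul [Fintype m] [DecidableEq m] [Fintype k]
    {A : Matrix m m ℝ} (hA : A.PosDef) (X : Matrix m k ℝ) :
    (fromBlocks A X Xᵀ (Xᵀ * A⁻¹ * X)).PosSemidef := by
  have := A.invertibleOfIsUnitDet hA.det_pos.ne'.isUnit
  simpa using (PosDef.fromBlocks₁₁ X (Xᵀ * A⁻¹ * X) hA).mpr (by simpa using PosSemidef.zero)

theorem convexOn_transpose_mul_inv_mul [Fintype m] [DecidableEq m] [Fintype k] :
    ConvexOn ℝ {p : Matrix m k ℝ × Matrix m m ℝ | p.2.PosDef} fun p => p.1ᵀ * p.2⁻¹ * p.1 := by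
  have hconv : Convex ℝ {p : Matrix m k ℝ × Matrix m m ℝ | p.2.PosDef} :=
    convex_setOf_posDef.linear_preimage (LinearMap.snd ℝ _ _)
  refine ⟨hconv, fun p hp q hq a b ha hb hab => ?_⟩
  have hA : (a • p + b • q).2.PosDef := hconv hp hq ha hb hab
  have := (a • p + b • q).2.invertibleOfIsUnitDet hA.det_pos.ne'.isUnit
  have hsum := ((posSemidef_fromBlocks_transpose_mul_inv_mul hp p.1).smul ha).add
    ((posSemidef_fromBlocks_transpose_mul_inv_mul hq q.1).smul hb)
  rw [fromBlocks_smul, fromBlocks_smul, fromBlocks_add] at hsum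
  have := (PosDef.fromBlocks₁₁ (a • p + b • q).1
    (a • (p.1ᵀ * p.2⁻¹ * p.1) + b • (q.1ᵀ * q.2⁻¹ * q.1)) hA).mp (by simpa using hsum)
  simpa [le_iff] using this

theorem PosDef.sub_of_le_smul [Fintype m] {A H : Matrix m m ℝ} (hA : A.PosDef) {γ : ℝ}
    (hγ : γ < 1) (hH : H ≤ γ • A) : (A - H).PosDef := by
  have hsplit : A - H = (γ • A - H) + (1 - γ) • A := by rw [sub_smul, one_smul]; abel
  rw [hsplit]
  exact PosDef.posSemidef_add hH (hA.smul (sub_pos.2 hγ))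

theorem monotone_transpose_mul_mul [Fintype m] [Fintype k] (B : Matrix m k ℝ) :
    Monotone fun Y : Matrix m m ℝ => Bᵀ * Y * B := fun Y₁ Y₂ hY => by
  simpa [le_iff, ← Matrix.mul_sub, ← Matrix.sub_mul] using hY.conjTranspose_mul_mul_same B

theorem continuousOn_transpose_mul_inv_mul [Fintype m] [DecidableEq m] :
    ContinuousOn (fun p : Matrix m k ℝ × Matrix m m ℝ => p.1ᵀ * p.2⁻¹ * p.1)
      {p | p.2.PosDef} := by
  intro p hp
  have hinv : ContinuousAt Inv.inv p.2 :=
    continuousAt_matrix_inv _ <| by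
      simpa [Ring.inverse_eq_inv'] using continuousAt_inv₀ hp.det_pos.ne'
  have hmul : Continuous fun q : Matrix m k ℝ × Matrix m m ℝ => q.1ᵀ * q.2 * q.1 :=
    (continuous_fst.matrix_transpose.matrix_mul continuous_snd).matrix_mul continuous_fst
  exact (hmul.continuousAt.comp (continuousAt_fst.prodMk (hinv.comp continuousAt_snd)))
    |>.continuousWithinAt

end Matrix

section phiZ

variable {n : ℕ} {𝒵 : Set (Matrix (Fin n ⊕ Unit) (Fin n ⊕ Unit) ℝ)}

theorem trace_mul_le_phiZ (h𝒵 : IsCompact 𝒵) {Z : Matrix (Fin n ⊕ Unit) (Fin n ⊕ Unit) ℝ}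
    (hZ : Z ∈ 𝒵) (Y : Matrix (Fin n ⊕ Unit) (Fin n ⊕ Unit) ℝ) : (Z * Y).trace ≤ phiZ 𝒵 Y :=
  le_csSup (h𝒵.image (continuous_id.matrix_mul continuous_const).matrix_trace).bddAbove
    ⟨Z, hZ, rfl⟩

theorem phiZ_le (h𝒵ne : 𝒵.Nonempty) {Y : Matrix (Fin n ⊕ Unit) (Fin n ⊕ Unit) ℝ} {c : ℝ}
    (h : ∀ Z ∈ 𝒵, (Z * Y).trace ≤ c) : phiZ 𝒵 Y ≤ c :=
  csSup_le (h𝒵ne.image _) (forall_mem_image.mpr h)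

theorem convexOn_phiZ (h𝒵ne : 𝒵.Nonempty) (h𝒵 : IsCompact 𝒵) : ConvexOn ℝ univ (phiZ 𝒵) := by
  refine ⟨convex_univ, fun Y₁ _ Y₂ _ a b ha hb _ => phiZ_le h𝒵ne fun Z hZ => ?_⟩
  rw [Matrix.mul_add, Matrix.mul_smul, Matrix.mul_smul, trace_add, trace_smul, trace_smul]
  exact add_le_add (smul_le_smul_of_nonneg_left (trace_mul_le_phiZ h𝒵 hZ Y₁) ha)
    (smul_le_smul_of_nonneg_left (trace_mul_le_phiZ h𝒵 hZ Y₂) hb)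

theorem monotone_phiZ (h𝒵ne : 𝒵.Nonempty) (h𝒵 : IsCompact 𝒵)
    (h𝒵psd : ∀ Z ∈ 𝒵, Z.PosSemidef) : Monotone (phiZ 𝒵) := by
  refine fun Y₁ Y₂ hY => phiZ_le h𝒵ne fun Z hZ => (trace_mul_le_phiZ h𝒵 hZ Y₂).trans' ?_
  have := (h𝒵psd Z hZ).trace_mul_nonneg hY
  rwa [Matrix.mul_sub, trace_sub, sub_nonneg] at this

theorem continuous_phiZ (h𝒵 : IsCompact 𝒵) : Continuous (phiZ 𝒵) :=
  h𝒵.continuous_sSup (continuous_snd.matrix_mul continuous_fst).matrix_trace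

theorem convexOn_phiZ_transpose_mul_mul {ν : ℕ} (h𝒵ne : 𝒵.Nonempty) (h𝒵 : IsCompact 𝒵)
    (B : Matrix (Fin ν ⊕ Unit) (Fin n ⊕ Unit) ℝ) :
    ConvexOn ℝ univ fun Y : Matrix (Fin ν ⊕ Unit) (Fin ν ⊕ Unit) ℝ => phiZ 𝒵 (Bᵀ * Y * B) :=
  (convexOn_phiZ h𝒵ne h𝒵).comp_linearMap
    ((mulRightLinearMap _ ℝ B).comp (mulLeftLinearMap _ ℝ Bᵀ))

end phiZ

section gammaMatrix

variable {ν : ℕ}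

noncomputable def hhMatLinearMap (ν : ℕ) :
    ((Fin ν → ℝ) × Matrix (Fin ν) (Fin ν) ℝ) →ₗ[ℝ] Matrix (Fin ν) (Fin ν ⊕ Unit) ℝ where
  toFun p := HhMat p.2 p.1
  map_add' p q := by ext i (j | j) <;> simp [HhMat]
  map_smul' c p := by ext i (j | j) <;> simp [HhMat]

noncomputable def qmatLinearMap (ν : ℕ) :
    ((Fin ν → ℝ) × Matrix (Fin ν) (Fin ν) ℝ) →ₗ[ℝ] Matrix (Fin ν ⊕ Unit) (Fin ν ⊕ Unit) ℝ where
  toFun p := Qmat p.2 p.1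
  map_add' p q := by ext (i | i) (j | j) <;> simp [Qmat]
  map_smul' c p := by ext (i | i) (j | j) <;> simp [Qmat]

noncomputable def hhMatSubAffineMap (C : Matrix (Fin ν) (Fin ν) ℝ) :
    ((Fin ν → ℝ) × Matrix (Fin ν) (Fin ν) ℝ) →ᵃ[ℝ]
      Matrix (Fin ν) (Fin ν ⊕ Unit) ℝ × Matrix (Fin ν) (Fin ν) ℝ where
  toFun p := (HhMat p.2 p.1, C - p.2)
  linear := (hhMatLinearMap ν).prod (-LinearMap.snd ℝ _ _)
  map_vadd' p v := by
    ext : 1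
    · exact (hhMatLinearMap ν).map_add v p
    · change C - (v + p).2 = -v.2 + (C - p.2)
      rw [Prod.snd_add]
      abel

noncomputable def gammaMatrix (C : Matrix (Fin ν) (Fin ν) ℝ)
    (p : (Fin ν → ℝ) × Matrix (Fin ν) (Fin ν) ℝ) : Matrix (Fin ν ⊕ Unit) (Fin ν ⊕ Unit) ℝ :=
  Qmat p.2 p.1 + (HhMat p.2 p.1)ᵀ * (C - p.2)⁻¹ * HhMat p.2 p.1

theorem gammaMatrix_eq (C : Matrix (Fin ν) (Fin ν) ℝ) :
    gammaMatrix C = ⇑(qmatLinearMap ν) +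
      (fun p : Matrix (Fin ν) (Fin ν ⊕ Unit) ℝ × Matrix (Fin ν) (Fin ν) ℝ => p.1ᵀ * p.2⁻¹ * p.1) ∘
        hhMatSubAffineMap C :=
  rfl

theorem convexOn_gammaMatrix (C : Matrix (Fin ν) (Fin ν) ℝ) :
    ConvexOn ℝ {p | (C - p.2).PosDef} (gammaMatrix C) := by
  have hF := convexOn_transpose_mul_inv_mul.comp_affineMap (hhMatSubAffineMap C)
  rw [gammaMatrix_eq]
  exact ((qmatLinearMap ν).convexOn hF.1).add hF

theorem continuousOn_gammaMatrix (C : Matrix (Fin ν) (Fin ν) ℝ) :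
    ContinuousOn (gammaMatrix C) {p | (C - p.2).PosDef} := by
  have hargs : Continuous (hhMatSubAffineMap C) := by
    change Continuous fun p => (hhMatLinearMap ν p, C - p.2)
    exact (hhMatLinearMap ν).continuous_of_finiteDimensional.prodMk
      (continuous_const.sub continuous_snd)
  rw [gammaMatrix_eq]
  exact (qmatLinearMap ν).continuous_of_finiteDimensional.continuousOn.add
    (continuousOn_transpose_mul_inv_mul.comp hargs.continuousOn fun p hp => hp)

end gammaMatrix

theorem stmt10_general {ν n : ℕ}
    (Θs : Matrix (Fin ν) (Fin ν) ℝ) (hΘs : Θs.PosDef)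
    (γ : ℝ) (hγ : γ ∈ Set.Ioo (0:ℝ) 1)
    (𝒵 : Set (Matrix (Fin n ⊕ Unit) (Fin n ⊕ Unit) ℝ))
    (h𝒵ne : 𝒵.Nonempty) (h𝒵comp : IsCompact 𝒵) (h𝒵psd : ∀ Z ∈ 𝒵, Z.PosSemidef)
    (B : Matrix (Fin ν ⊕ Unit) (Fin n ⊕ Unit) ℝ)
    (Γ : (Fin ν → ℝ) × Matrix (Fin ν) (Fin ν) ℝ → ℝ)
    (hΓ : ∀ p : (Fin ν → ℝ) × Matrix (Fin ν) (Fin ν) ℝ,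
      Γ p = (1/2) * phiZ 𝒵 (Bᵀ *
        (Qmat p.2 p.1 + (HhMat p.2 p.1)ᵀ * (Θs⁻¹ - p.2)⁻¹ * (HhMat p.2 p.1)) * B)) :
    ConvexOn ℝ {p : (Fin ν → ℝ) × Matrix (Fin ν) (Fin ν) ℝ |
        (p.2 + γ • Θs⁻¹).PosSemidef ∧ (γ • Θs⁻¹ - p.2).PosSemidef} Γ ∧
    ContinuousOn Γ {p : (Fin ν → ℝ) × Matrix (Fin ν) (Fin ν) ℝ |
        (p.2 + γ • Θs⁻¹).PosSemidef ∧ (γ • Θs⁻¹ - p.2).PosSemidef} := by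
  have hS : {p : (Fin ν → ℝ) × Matrix (Fin ν) (Fin ν) ℝ |
      (p.2 + γ • Θs⁻¹).PosSemidef ∧ (γ • Θs⁻¹ - p.2).PosSemidef} =
      Prod.snd ⁻¹' Icc (-(γ • Θs⁻¹)) (γ • Θs⁻¹) := by
    ext p
    simp [le_iff]
  have hSconv : Convex ℝ (Prod.snd ⁻¹' Icc (-(γ • Θs⁻¹)) (γ • Θs⁻¹) :
      Set ((Fin ν → ℝ) × Matrix (Fin ν) (Fin ν) ℝ)) :=
    (convex_Icc _ _).linear_preimage (LinearMap.snd ℝ _ _)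
  have hSD : Prod.snd ⁻¹' Icc (-(γ • Θs⁻¹)) (γ • Θs⁻¹) ⊆
      {p : (Fin ν → ℝ) × Matrix (Fin ν) (Fin ν) ℝ | (Θs⁻¹ - p.2).PosDef} :=
    fun p hp => hΘs.inv.sub_of_le_smul hγ.2 hp.2
  have hΓ' : Γ = fun p => (1 / 2 : ℝ) • phiZ 𝒵 (Bᵀ * gammaMatrix Θs⁻¹ p * B) := funext hΓ
  rw [hS, hΓ']
  refine ⟨?_, ?_⟩
  · exact (((convexOn_phiZ_transpose_mul_mul h𝒵ne h𝒵comp B).monotone_comp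
      ((monotone_phiZ h𝒵ne h𝒵comp h𝒵psd).comp (monotone_transpose_mul_mul B))
      (convexOn_gammaMatrix Θs⁻¹)).subset hSD hSconv).smul (by norm_num)
  · exact ((continuous_phiZ h𝒵comp).comp_continuousOn
      ((continuous_const.matrix_mul continuous_id).matrix_mul continuous_const
        |>.comp_continuousOn (continuousOn_gammaMatrix Θs⁻¹)) |>.mono hSD).const_smul (1 / 2 : ℝ)

theorem stmt10 {ν n : ℕ} (hν : 1 ≤ ν) (hn : 1 ≤ n)
    (Θs : Matrix (Fin ν) (Fin ν) ℝ) (hΘs : Θs.PosDef)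
    (γ : ℝ) (hγ : γ ∈ Set.Ioo (0:ℝ) 1)
    (𝒵 : Set (Matrix (Fin n ⊕ Unit) (Fin n ⊕ Unit) ℝ))
    (h𝒵ne : 𝒵.Nonempty) (h𝒵comp : IsCompact 𝒵) (h𝒵psd : ∀ Z ∈ 𝒵, Z.PosSemidef)
    (B : Matrix (Fin ν ⊕ Unit) (Fin n ⊕ Unit) ℝ)
    (Γ : (Fin ν → ℝ) × Matrix (Fin ν) (Fin ν) ℝ → ℝ)
    (hΓ : ∀ p : (Fin ν → ℝ) × Matrix (Fin ν) (Fin ν) ℝ,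
      Γ p = (1/2) * phiZ 𝒵 (Bᵀ *
        (Qmat p.2 p.1 + (HhMat p.2 p.1)ᵀ * (Θs⁻¹ - p.2)⁻¹ * (HhMat p.2 p.1)) * B)) :
    ConvexOn ℝ {p : (Fin ν → ℝ) × Matrix (Fin ν) (Fin ν) ℝ |
        (p.2 + γ • Θs⁻¹).PosSemidef ∧ (γ • Θs⁻¹ - p.2).PosSemidef} Γ ∧
    ContinuousOn Γ {p : (Fin ν → ℝ) × Matrix (Fin ν) (Fin ν) ℝ |
        (p.2 + γ • Θs⁻¹).PosSemidef ∧ (γ • Θs⁻¹ - p.2).PosSemidef} :=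
  stmt10_general Θs hΘs γ hγ 𝒵 h𝒵ne h𝒵comp h𝒵psd B Γ hΓ
end

section
/- Let Θ* be a symmetric positive definite d×d matrix, let δ ∈ [0, 2], let Θ be a symmetric positive semidefinite d×d matrix with Θ ⪯ Θ* and ‖Θ^{1/2}(Θ*)^{−1/2} − I_d‖ ≤ δ, and let H be a symmetric d×d matrix with −(Θ*)⁻¹ ≺ H ≺ (Θ*)⁻¹. Then −½ ln Det(I − Θ^{1/2}HΘ^{1/2}) ≤ −½ ln Det(I − (Θ*)^{1/2}H(Θ*)^{1/2}) + ½ Tr((Θ − Θ*)H) + δ(2+δ) ‖(Θ*)^{1/2}H(Θ*)^{1/2}‖_F² / (2(1 − ‖(Θ*)^{1/2}H(Θ*)^{1/2}‖)). -/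
/-!
Put `S = (Θ*)^{1/2}`, `T = Θ^{1/2}`, `A = S H S` and `R = T S⁻¹`, so that `T H T = R A Rᵀ`.
The two-sided bound on `H` gives `‖A‖ < 1`, `Θ ⪯ Θ*` gives `RᵀR = S⁻¹ Θ S⁻¹ ⪯ 1`, i.e. `‖R‖ ≤ 1`,
and `‖R - 1‖ ≤ δ` is the remaining hypothesis. Concavity of `log det` at `X = 1 - B`,
`B = R A Rᵀ`, gives `log det (1 - A) ≤ log det (1 - B) + tr ((1 - B)⁻¹ (B - A))`. Writing
`(1 - B)⁻¹ = 1 + (1 - B)⁻¹ B` splits the trace into `tr (B - A) = tr ((Θ - Θ*) H)` and a remainder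
at most `‖B‖_F ‖B - A‖_F / (1 - ‖B‖)`; since `B - A = (R - 1) A Rᵀ + A (R - 1)ᵀ` this is at most
`2 δ ‖A‖_F² / (1 - ‖A‖)`, which is below the stated bound.
-/

open Matrix

/-- The positive semidefinite square root of a positive semidefinite matrix
(the definition of `Matrix.PosSemidef.sqrt` in the older Mathlib, since removed). -/
noncomputable def Matrix.PosSemidef.sqrt {n : Type*} [Fintype n] [DecidableEq n]
    {A : Matrix n n ℝ} (hA : A.PosSemidef) : Matrix n n ℝ :=
  hA.1.eigenvectorUnitary.1 * diagonal ((↑) ∘ (√·) ∘ hA.1.eigenvalues) *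
    (star hA.1.eigenvectorUnitary : Matrix n n ℝ)

/-- The spectral norm of a square real matrix. -/
noncomputable def specNorm {d : ℕ} (M : Matrix (Fin d) (Fin d) ℝ) : ℝ :=
  ‖Matrix.toEuclideanCLM (𝕜 := ℝ) M‖

/-- The Frobenius norm of a square real matrix. -/
noncomputable def frobNorm {d : ℕ} (M : Matrix (Fin d) (Fin d) ℝ) : ℝ :=
  Real.sqrt (∑ i, ∑ j, (M i j)^2)

open scoped Matrix.Norms.L2Operator

namespace Matrix.PosSemidef

variable {n : Type*} [Fintype n] [DecidableEq n] {A : Matrix n n ℝ}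

theorem posSemidef_sqrt (hA : A.PosSemidef) : hA.sqrt.PosSemidef := by
  unfold Matrix.PosSemidef.sqrt
  rw [star_eq_conjTranspose]
  exact (PosSemidef.diagonal fun i => by simp [Real.sqrt_nonneg]).mul_mul_conjTranspose_same _

theorem sqrt_mul_self (hA : A.PosSemidef) : hA.sqrt * hA.sqrt = A := by
  set U : Matrix n n ℝ := (hA.1.eigenvectorUnitary : Matrix n n ℝ)
  have hU : star U * U = 1 := Unitary.coe_star_mul_self hA.1.eigenvectorUnitary
  set D : Matrix n n ℝ := diagonal (((↑) ∘ (√·) ∘ hA.1.eigenvalues : n → ℝ))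
  have hD : D * D = diagonal (RCLike.ofReal ∘ hA.1.eigenvalues) := by
    rw [diagonal_mul_diagonal]
    congr 1
    funext i
    simp [Real.mul_self_sqrt (hA.eigenvalues_nonneg i)]
  calc hA.sqrt * hA.sqrt = U * (D * (star U * U) * D) * star U := by
        simp only [Matrix.PosSemidef.sqrt, U, D, Matrix.mul_assoc]
    _ = A := by
        rw [hU, Matrix.mul_one, hD]
        conv_rhs => rw [hA.1.spectral_theorem, Unitary.conjStarAlgAut_apply]

theorem transpose_sqrt (hA : A.PosSemidef) : hA.sqrtᵀ = hA.sqrt :=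
  hA.posSemidef_sqrt.isHermitian

end Matrix.PosSemidef

namespace Matrix

variable {m n : Type*} [Fintype m] [Fintype n]

lemma PosSemidef.nonneg_of_mulVec_eq_smul {P : Matrix n n ℝ} (hP : P.PosSemidef) {v : n → ℝ}
    {μ : ℝ} (hv : v ≠ 0) (h : P *ᵥ v = μ • v) : 0 ≤ μ := by
  have := hP.dotProduct_mulVec_nonneg v
  rw [h, dotProduct_smul, smul_eq_mul] at this
  exact nonneg_of_mul_nonneg_left this (dotProduct_star_self_pos_iff.2 hv)

lemma PosDef.pos_of_mulVec_eq_smul {P : Matrix n n ℝ} (hP : P.PosDef) {v : n → ℝ}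
    {μ : ℝ} (hv : v ≠ 0) (h : P *ᵥ v = μ • v) : 0 < μ := by
  have := hP.dotProduct_mulVec_pos hv
  rw [h, dotProduct_smul, smul_eq_mul] at this
  exact pos_of_mul_pos_left this (dotProduct_star_self_nonneg v)

lemma isHermitian_mul_mul_of_transpose_eq {S H : Matrix n n ℝ} (hS : Sᵀ = S) (hH : H.IsSymm) :
    (S * H * S).IsHermitian := by
  rw [IsHermitian, conjTranspose_eq_transpose_of_trivial, transpose_mul, transpose_mul, hS, hH,
    Matrix.mul_assoc]

lemma trace_mul_mul_sub_mul_mul (S T H : Matrix n n ℝ) :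
    (T * H * T - S * H * S).trace = ((T * T - S * S) * H).trace := by
  rw [trace_sub, trace_mul_cycle T, trace_mul_cycle S, ← trace_sub, sub_mul]

variable [DecidableEq n]

namespace IsHermitian

variable {A : Matrix n n ℝ} (hA : A.IsHermitian)
include hA

lemma eigenvectorBasis_ne_zero (i : n) : ⇑(hA.eigenvectorBasis i) ≠ 0 :=
  (WithLp.ofLp_eq_zero 2).ne.2 <| hA.eigenvectorBasis.orthonormal.ne_zero i

lemma l2_opNorm_eq_norm_eigenvalues : ‖A‖ = ‖hA.eigenvalues‖ := by
  conv_lhs => rw [hA.spectral_theorem, Unitary.conjStarAlgAut_apply]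
  rw [CStarRing.norm_mul_mem_unitary _ (Unitary.star_mem hA.eigenvectorUnitary.2),
    CStarRing.norm_coe_unitary_mul, l2_opNorm_diagonal]
  rfl

lemma abs_eigenvalues_lt_one (h₁ : (1 - A).PosDef) (h₂ : (1 + A).PosDef) (i : n) :
    |hA.eigenvalues i| < 1 := by
  have hv := hA.eigenvectorBasis_ne_zero i
  have hAv := hA.mulVec_eigenvectorBasis i
  have hlt := h₁.pos_of_mulVec_eq_smul (μ := 1 - hA.eigenvalues i) hv
    (by rw [sub_mulVec, one_mulVec, hAv, sub_smul, one_smul])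
  have hgt := h₂.pos_of_mulVec_eq_smul (μ := 1 + hA.eigenvalues i) hv
    (by rw [add_mulVec, one_mulVec, hAv, add_smul, one_smul])
  rw [abs_lt]
  constructor <;> linarith

lemma l2_opNorm_lt_one (h₁ : (1 - A).PosDef) (h₂ : (1 + A).PosDef) : ‖A‖ < 1 := by
  rw [hA.l2_opNorm_eq_norm_eigenvalues, pi_norm_lt_iff one_pos]
  exact hA.abs_eigenvalues_lt_one h₁ h₂

lemma posDef_one_sub_of_l2_opNorm_lt_one (h : ‖A‖ < 1) : (1 - A).PosDef := by
  refine .of_dotProduct_mulVec_pos (isHermitian_one.sub hA) fun x hx => ?_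
  have hx' : 0 < ‖WithLp.toLp 2 x‖ := by simpa using hx
  have hxx : star x ⬝ᵥ x = ‖WithLp.toLp 2 x‖ ^ 2 := by
    rw [← real_inner_self_eq_norm_sq, EuclideanSpace.inner_toLp_toLp]
    simp
  have hAx : star x ⬝ᵥ (A *ᵥ x) ≤ ‖A‖ * ‖WithLp.toLp 2 x‖ ^ 2 := by
    calc star x ⬝ᵥ (A *ᵥ x)
        = inner ℝ (WithLp.toLp 2 x) (toEuclideanCLM (𝕜 := ℝ) A (WithLp.toLp 2 x)) := by
          rw [inner_toEuclideanCLM]; rfl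
      _ ≤ ‖WithLp.toLp 2 x‖ * (‖A‖ * ‖WithLp.toLp 2 x‖) := by
          grw [real_inner_le_norm, ContinuousLinearMap.le_opNorm]; rfl
      _ = ‖A‖ * ‖WithLp.toLp 2 x‖ ^ 2 := by ring
  rw [sub_mulVec, one_mulVec, dotProduct_sub, hxx]
  nlinarith [mul_lt_mul_of_pos_right h (pow_pos hx' 2)]

end IsHermitian

lemma l2_opNorm_le_one_of_posSemidef {A : Matrix m n ℝ} (h : (1 - Aᵀ * A).PosSemidef) :
    ‖A‖ ≤ 1 := by
  have hP := posSemidef_conjTranspose_mul_self A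
  rw [conjTranspose_eq_transpose_of_trivial] at hP
  have hle : ‖Aᵀ * A‖ ≤ 1 := by
    rw [hP.1.l2_opNorm_eq_norm_eigenvalues, pi_norm_le_iff_of_nonneg zero_le_one]
    intro i
    have hv := hP.1.eigenvectorBasis_ne_zero i
    have hPv := hP.1.mulVec_eigenvectorBasis i
    have := h.nonneg_of_mulVec_eq_smul (μ := 1 - hP.1.eigenvalues i) hv
      (by rw [sub_mulVec, one_mulVec, hPv, sub_smul, one_smul])
    rw [Real.norm_of_nonneg (hP.eigenvalues_nonneg i)]
    linarith
  rw [← conjTranspose_eq_transpose_of_trivial, l2_opNorm_conjTranspose_mul_self] at hle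
  nlinarith [norm_nonneg A]

lemma l2_opNorm_inv_one_sub_le {A : Matrix n n ℝ} (h : ‖A‖ < 1) :
    ‖(1 - A)⁻¹‖ ≤ (1 - ‖A‖)⁻¹ := by
  rw [nonsing_inv_eq_ringInverse, NormedRing.inverse_one_sub _ h]
  have h1 : ‖(1 : Matrix n n ℝ)‖ ≤ 1 := by
    rw [cstar_norm_def, map_one]
    exact ContinuousLinearMap.norm_id_le
  exact (tsum_geometric_le_of_norm_lt_one A h).trans (by linarith)

lemma l2_opNorm_transpose (A : Matrix n n ℝ) : ‖Aᵀ‖ = ‖A‖ := by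
  rw [← conjTranspose_eq_transpose_of_trivial, l2_opNorm_conjTranspose]

lemma l2_opNorm_mul_mul_transpose_le {A R : Matrix n n ℝ} (hR : ‖R‖ ≤ 1) :
    ‖R * A * Rᵀ‖ ≤ ‖A‖ := by
  calc ‖R * A * Rᵀ‖ ≤ ‖R‖ * ‖A‖ * ‖Rᵀ‖ := norm_mul₃_le
    _ ≤ 1 * ‖A‖ * 1 := by rw [l2_opNorm_transpose]; gcongr
    _ = ‖A‖ := by ring

end Matrix

section SquareRoot

variable {n : Type*} [Fintype n] [DecidableEq n] {S Θ : Matrix n n ℝ}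

lemma isUnit_det_of_mul_self_eq (hSS : S * S = Θ) (hΘ : IsUnit Θ.det) : IsUnit S.det := by
  rw [← hSS, det_mul, IsUnit.mul_iff] at hΘ
  exact hΘ.1

lemma mul_inv_mul_eq_one_of_mul_self_eq (hSS : S * S = Θ) (hΘ : IsUnit Θ.det) :
    S * Θ⁻¹ * S = 1 := by
  have hS := isUnit_det_of_mul_self_eq hSS hΘ
  rw [← hSS, Matrix.mul_inv_rev, mul_nonsing_inv_cancel_left _ _ hS, nonsing_inv_mul _ hS]

lemma inv_mul_mul_inv_eq_one_of_mul_self_eq (hSS : S * S = Θ) (hΘ : IsUnit Θ.det) :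
    S⁻¹ * Θ * S⁻¹ = 1 := by
  have hS := isUnit_det_of_mul_self_eq hSS hΘ
  rw [← hSS, ← mul_assoc, nonsing_inv_mul _ hS, one_mul, mul_nonsing_inv _ hS]

end SquareRoot

namespace Matrix.PosDef

variable {n : Type*} [Fintype n] [DecidableEq n]

lemma log_det_le_trace_sub_card {Z : Matrix n n ℝ} (hZ : Z.PosDef) :
    Real.log Z.det ≤ Z.trace - Fintype.card n := by
  have hdet : Z.det = ∏ i, hZ.1.eigenvalues i := by simpa using hZ.1.det_eq_prod_eigenvalues
  have htr : Z.trace = ∑ i, hZ.1.eigenvalues i := by simpa using hZ.1.trace_eq_sum_eigenvalues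
  rw [hdet, htr, Real.log_prod fun i _ => (hZ.eigenvalues_pos i).ne']
  calc ∑ i, Real.log (hZ.1.eigenvalues i) ≤ ∑ i, (hZ.1.eigenvalues i - 1) :=
        Finset.sum_le_sum fun i _ => Real.log_le_sub_one_of_pos (hZ.eigenvalues_pos i)
    _ = _ := by simp

lemma log_det_le_log_det_add_trace {X Y : Matrix n n ℝ} (hX : X.PosDef) (hY : Y.PosDef) :
    Real.log Y.det ≤ Real.log X.det + (X⁻¹ * (Y - X)).trace := by
  set S := hY.posSemidef.sqrt
  have hSS : S * S = Y := hY.posSemidef.sqrt_mul_self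
  have hS : IsUnit S := (isUnit_iff_isUnit_det S).2
    (isUnit_det_of_mul_self_eq hSS ((isUnit_iff_isUnit_det Y).1 hY.isUnit))
  have hZ : (S * X⁻¹ * S).PosDef := by
    have := (IsUnit.posDef_star_left_conjugate_iff hS).2 hX.inv
    rwa [star_eq_conjTranspose, conjTranspose_eq_transpose_of_trivial,
      hY.posSemidef.transpose_sqrt] at this
  have hdet : Real.log (S * X⁻¹ * S).det = Real.log Y.det - Real.log X.det := by
    rw [det_mul, det_mul, det_nonsing_inv, Ring.inverse_eq_inv', mul_comm, ← mul_assoc,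
      ← det_mul, hSS, Real.log_mul hY.det_pos.ne' (inv_ne_zero hX.det_pos.ne'), Real.log_inv,
      sub_eq_add_neg]
  have htr : (S * X⁻¹ * S).trace = (X⁻¹ * Y).trace := by
    rw [trace_mul_cycle, hSS, trace_mul_comm]
  have := hZ.log_det_le_trace_sub_card
  rw [hdet, htr] at this
  rw [mul_sub, trace_sub, nonsing_inv_mul _ (isUnit_iff_ne_zero.2 hX.det_pos.ne'), trace_one]
  linarith

end Matrix.PosDef

section Frobenius

variable {d : ℕ}

lemma frobNorm_nonneg (M : Matrix (Fin d) (Fin d) ℝ) : 0 ≤ frobNorm M := Real.sqrt_nonneg _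

lemma frobNorm_sq (M : Matrix (Fin d) (Fin d) ℝ) : frobNorm M ^ 2 = ∑ i, ∑ j, M i j ^ 2 :=
  Real.sq_sqrt (by positivity)

lemma frobNorm_eq_norm_toLp (M : Matrix (Fin d) (Fin d) ℝ) :
    frobNorm M = ‖WithLp.toLp 2 (fun p : Fin d × Fin d => M p.1 p.2)‖ := by
  simp [EuclideanSpace.norm_eq, frobNorm, Fintype.sum_prod_type]

lemma frobNorm_transpose (M : Matrix (Fin d) (Fin d) ℝ) : frobNorm Mᵀ = frobNorm M := by
  rw [frobNorm, frobNorm, Finset.sum_comm]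
  rfl

lemma frobNorm_add_le (M N : Matrix (Fin d) (Fin d) ℝ) :
    frobNorm (M + N) ≤ frobNorm M + frobNorm N := by
  simp only [frobNorm_eq_norm_toLp]
  exact norm_add_le (WithLp.toLp 2 fun p : Fin d × Fin d => M p.1 p.2)
    (WithLp.toLp 2 fun p : Fin d × Fin d => N p.1 p.2)

lemma trace_mul_le_frobNorm_mul_frobNorm (M N : Matrix (Fin d) (Fin d) ℝ) :
    (M * N).trace ≤ frobNorm M * frobNorm N := by
  have h : (M * N).trace = inner ℝ (WithLp.toLp 2 (fun p : Fin d × Fin d => Mᵀ p.1 p.2))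
      (WithLp.toLp 2 (fun p : Fin d × Fin d => N p.1 p.2)) := by
    rw [EuclideanSpace.inner_toLp_toLp, Matrix.trace, dotProduct, Fintype.sum_prod_type,
      Finset.sum_comm]
    simp [Matrix.mul_apply, mul_comm]
  rw [h, ← frobNorm_transpose M, frobNorm_eq_norm_toLp, frobNorm_eq_norm_toLp]
  exact real_inner_le_norm _ _

lemma frobNorm_mul_le_l2_opNorm_mul (M N : Matrix (Fin d) (Fin d) ℝ) :
    frobNorm (M * N) ≤ ‖M‖ * frobNorm N := by
  have hcol : ∀ j, ∑ i, (M * N) i j ^ 2 ≤ ‖M‖ ^ 2 * ∑ i, N i j ^ 2 := fun j => by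
    have := M.l2_opNorm_mulVec (WithLp.toLp 2 fun i => N i j)
    rw [← pow_le_pow_iff_left₀ (norm_nonneg _) (by positivity) two_ne_zero, mul_pow,
      EuclideanSpace.real_norm_sq_eq, EuclideanSpace.real_norm_sq_eq] at this
    simpa [Matrix.mul_apply, mulVec, dotProduct] using this
  rw [← pow_le_pow_iff_left₀ (frobNorm_nonneg _) (by positivity [frobNorm_nonneg N]) two_ne_zero,
    mul_pow, frobNorm_sq, frobNorm_sq, Finset.sum_comm, Finset.sum_comm (f := fun i j => N i j ^ 2),
    Finset.mul_sum]
  exact Finset.sum_le_sum fun j _ => hcol j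

lemma frobNorm_mul_le_frobNorm_mul_l2_opNorm (M N : Matrix (Fin d) (Fin d) ℝ) :
    frobNorm (M * N) ≤ frobNorm M * ‖N‖ := by
  rw [← frobNorm_transpose, transpose_mul, ← frobNorm_transpose M, mul_comm,
    ← l2_opNorm_transpose N]
  exact frobNorm_mul_le_l2_opNorm_mul _ _

end Frobenius

section Whitening

variable {n : Type*} [Fintype n] [DecidableEq n] {S Θ : Matrix n n ℝ}

lemma l2_opNorm_mul_mul_lt_one {H : Matrix n n ℝ} (hS : Sᵀ = S) (hSS : S * S = Θ)
    (hΘ : IsUnit Θ.det) (hH : H.IsSymm) (h₁ : (Θ⁻¹ - H).PosDef) (h₂ : (H + Θ⁻¹).PosDef) :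
    ‖S * H * S‖ < 1 := by
  have hS' : star S = S := by rw [star_eq_conjTranspose, conjTranspose_eq_transpose_of_trivial, hS]
  have hconj : ∀ P, (S * P * S).PosDef ↔ P.PosDef := fun P => by
    have := IsUnit.posDef_star_left_conjugate_iff (x := P)
      ((isUnit_iff_isUnit_det S).2 (isUnit_det_of_mul_self_eq hSS hΘ))
    rwa [hS'] at this
  have hSHS := isHermitian_mul_mul_of_transpose_eq hS hH
  have hone := mul_inv_mul_eq_one_of_mul_self_eq hSS hΘ
  refine hSHS.l2_opNorm_lt_one ?_ ?_
  · rwa [← hone, ← sub_mul, ← mul_sub, hconj]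
  · rwa [← hone, ← add_mul, ← mul_add, hconj, add_comm]

lemma mul_inv_mul_mul_mul_transpose_eq {T H : Matrix n n ℝ} (hS : Sᵀ = S) (hT : Tᵀ = T)
    (hSu : IsUnit S.det) : T * S⁻¹ * (S * H * S) * (T * S⁻¹)ᵀ = T * H * T := by
  rw [transpose_mul, transpose_nonsing_inv, hS, hT]
  simp only [Matrix.mul_assoc, nonsing_inv_mul_cancel_left _ _ hSu,
    mul_nonsing_inv_cancel_left _ _ hSu]

lemma l2_opNorm_mul_inv_le_one {T Θs : Matrix n n ℝ} (hT : Tᵀ = T) (hTT : T * T = Θ)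
    (hS : Sᵀ = S) (hSS : S * S = Θs) (hΘs : IsUnit Θs.det) (hle : (Θs - Θ).PosSemidef) :
    ‖T * S⁻¹‖ ≤ 1 := by
  apply l2_opNorm_le_one_of_posSemidef
  have hgram : 1 - (T * S⁻¹)ᵀ * (T * S⁻¹) = (S⁻¹)ᴴ * (Θs - Θ) * S⁻¹ := by
    rw [conjTranspose_eq_transpose_of_trivial, transpose_mul, transpose_nonsing_inv, hS, hT,
      mul_sub, sub_mul, inv_mul_mul_inv_eq_one_of_mul_self_eq hSS hΘs, ← hTT]
    simp only [Matrix.mul_assoc]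
  rw [hgram]
  exact hle.conjTranspose_mul_mul_same _

end Whitening

section Perturbation

variable {d : ℕ}

lemma trace_inv_one_sub_mul_le {B : Matrix (Fin d) (Fin d) ℝ} (hB : ‖B‖ < 1)
    (C : Matrix (Fin d) (Fin d) ℝ) :
    ((1 - B)⁻¹ * C).trace ≤ C.trace + frobNorm B * frobNorm C / (1 - ‖B‖) := by
  have hunit : IsUnit (1 - B).det :=
    (isUnit_iff_isUnit_det _).1 (by simpa using (Units.oneSub B hB).isUnit)
  have hresolvent : (1 - B)⁻¹ = 1 + (1 - B)⁻¹ * B := by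
    have := nonsing_inv_mul _ hunit
    rw [mul_sub, mul_one] at this
    exact sub_eq_iff_eq_add.1 this
  have hpos : 0 < 1 - ‖B‖ := by linarith
  calc ((1 - B)⁻¹ * C).trace = C.trace + ((1 - B)⁻¹ * B * C).trace := by
        conv_lhs => rw [hresolvent]
        rw [add_mul, one_mul, trace_add]
    _ ≤ C.trace + ‖(1 - B)⁻¹‖ * frobNorm B * frobNorm C := by
        grw [trace_mul_le_frobNorm_mul_frobNorm, frobNorm_mul_le_l2_opNorm_mul]
        exact frobNorm_nonneg C
    _ ≤ C.trace + (1 - ‖B‖)⁻¹ * frobNorm B * frobNorm C := by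
        grw [l2_opNorm_inv_one_sub_le hB]
        · exact frobNorm_nonneg B
        · exact frobNorm_nonneg C
    _ = C.trace + frobNorm B * frobNorm C / (1 - ‖B‖) := by
        field_simp

lemma frobNorm_mul_mul_transpose_le {A R : Matrix (Fin d) (Fin d) ℝ} (hR : ‖R‖ ≤ 1) :
    frobNorm (R * A * Rᵀ) ≤ frobNorm A := by
  calc frobNorm (R * A * Rᵀ) ≤ ‖R‖ * frobNorm A * ‖Rᵀ‖ := by
        grw [frobNorm_mul_le_frobNorm_mul_l2_opNorm, frobNorm_mul_le_l2_opNorm_mul]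
    _ ≤ 1 * frobNorm A * 1 := by
        rw [l2_opNorm_transpose]
        have := frobNorm_nonneg A
        gcongr
    _ = frobNorm A := by ring

lemma frobNorm_mul_mul_transpose_sub_le {A R : Matrix (Fin d) (Fin d) ℝ} {δ : ℝ}
    (hR : ‖R‖ ≤ 1) (hRδ : ‖R - 1‖ ≤ δ) :
    frobNorm (R * A * Rᵀ - A) ≤ 2 * δ * frobNorm A := by
  have hA := frobNorm_nonneg A
  have hδ : 0 ≤ δ := (norm_nonneg _).trans hRδ
  have hsplit : R * A * Rᵀ - A = (R - 1) * A * Rᵀ + A * (R - 1)ᵀ := by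
    rw [transpose_sub, transpose_one]
    noncomm_ring
  have hleft : frobNorm ((R - 1) * A * Rᵀ) ≤ δ * frobNorm A := by
    calc frobNorm ((R - 1) * A * Rᵀ) ≤ ‖R - 1‖ * frobNorm A * ‖Rᵀ‖ := by
          grw [frobNorm_mul_le_frobNorm_mul_l2_opNorm, frobNorm_mul_le_l2_opNorm_mul]
      _ ≤ δ * frobNorm A * 1 := by
          rw [l2_opNorm_transpose]
          gcongr
      _ = δ * frobNorm A := mul_one _
  have hright : frobNorm (A * (R - 1)ᵀ) ≤ δ * frobNorm A := by
    grw [frobNorm_mul_le_frobNorm_mul_l2_opNorm, l2_opNorm_transpose, hRδ, mul_comm]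
  grw [hsplit, frobNorm_add_le, hleft, hright]
  linarith

lemma log_det_one_sub_le {A B : Matrix (Fin d) (Fin d) ℝ} (hA : (1 - A).PosDef)
    (hB : B.IsHermitian) (hB1 : ‖B‖ < 1) :
    Real.log (1 - A).det ≤ Real.log (1 - B).det + (B - A).trace +
      frobNorm B * frobNorm (B - A) / (1 - ‖B‖) := by
  have := (hB.posDef_one_sub_of_l2_opNorm_lt_one hB1).log_det_le_log_det_add_trace hA
  rw [sub_sub_sub_cancel_left] at this
  linarith [trace_inv_one_sub_mul_le hB1 (B - A)]

lemma log_det_one_sub_le_of_conj {A R : Matrix (Fin d) (Fin d) ℝ} {δ : ℝ} (hA : A.IsHermitian)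
    (hA1 : ‖A‖ < 1) (hR : ‖R‖ ≤ 1) (hRδ : ‖R - 1‖ ≤ δ) :
    Real.log (1 - A).det ≤ Real.log (1 - R * A * Rᵀ).det + (R * A * Rᵀ - A).trace +
      2 * δ * frobNorm A ^ 2 / (1 - ‖A‖) := by
  have hB : (R * A * Rᵀ).IsHermitian := by
    simpa [conjTranspose_eq_transpose_of_trivial] using isHermitian_mul_mul_conjTranspose R hA
  have hBA : ‖R * A * Rᵀ‖ ≤ ‖A‖ := l2_opNorm_mul_mul_transpose_le hR
  have hδ : 0 ≤ δ := (norm_nonneg _).trans hRδ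
  have hpos : 0 < 1 - ‖A‖ := by linarith
  have hrem : frobNorm (R * A * Rᵀ) * frobNorm (R * A * Rᵀ - A) / (1 - ‖R * A * Rᵀ‖) ≤
      2 * δ * frobNorm A ^ 2 / (1 - ‖A‖) := by
    have := frobNorm_nonneg A
    calc _ ≤ frobNorm A * (2 * δ * frobNorm A) / (1 - ‖A‖) := by
          gcongr
          · exact frobNorm_nonneg _
          · exact frobNorm_mul_mul_transpose_le hR
          · exact frobNorm_mul_mul_transpose_sub_le hR hRδ
      _ = 2 * δ * frobNorm A ^ 2 / (1 - ‖A‖) := by ring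
  linarith [log_det_one_sub_le (hA.posDef_one_sub_of_l2_opNorm_lt_one hA1) hB (hBA.trans_lt hA1)]

end Perturbation

lemma specNorm_eq_l2_opNorm {d : ℕ} (M : Matrix (Fin d) (Fin d) ℝ) : specNorm M = ‖M‖ := rfl

theorem stmt12_general {d : ℕ} (Θs Θ H : Matrix (Fin d) (Fin d) ℝ)
    (hΘs : Θs.PosDef) (δ : ℝ)
    (hΘ : Θ.PosSemidef) (hle : (Θs - Θ).PosSemidef)
    (hnorm : specNorm (hΘ.sqrt * (hΘs.posSemidef.sqrt)⁻¹ - 1) ≤ δ)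
    (hH : H.IsSymm) (h1 : (Θs⁻¹ - H).PosDef) (h2 : (H + Θs⁻¹).PosDef) :
    -(1/2) * Real.log ((1 - hΘ.sqrt * H * hΘ.sqrt).det) ≤
      -(1/2) * Real.log ((1 - hΘs.posSemidef.sqrt * H * hΘs.posSemidef.sqrt).det)
      + (1/2) * ((Θ - Θs) * H).trace
      + δ * (2 + δ) * (frobNorm (hΘs.posSemidef.sqrt * H * hΘs.posSemidef.sqrt))^2 /
          (2 * (1 - specNorm (hΘs.posSemidef.sqrt * H * hΘs.posSemidef.sqrt))) := by
  rw [specNorm_eq_l2_opNorm] at hnorm ⊢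
  set S := hΘs.posSemidef.sqrt
  set T := hΘ.sqrt
  have hS : Sᵀ = S := hΘs.posSemidef.transpose_sqrt
  have hT : Tᵀ = T := hΘ.transpose_sqrt
  have hSS : S * S = Θs := hΘs.posSemidef.sqrt_mul_self
  have hTT : T * T = Θ := hΘ.sqrt_mul_self
  have hunit : IsUnit Θs.det := (isUnit_iff_isUnit_det Θs).1 hΘs.isUnit
  have hA1 : ‖S * H * S‖ < 1 := l2_opNorm_mul_mul_lt_one hS hSS hunit hH h1 h2
  have key := log_det_one_sub_le_of_conj (isHermitian_mul_mul_of_transpose_eq hS hH) hA1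
    (l2_opNorm_mul_inv_le_one hT hTT hS hSS hunit hle) hnorm
  rw [mul_inv_mul_mul_mul_transpose_eq hS hT (isUnit_det_of_mul_self_eq hSS hunit),
    trace_mul_mul_sub_mul_mul, hTT, hSS] at key
  have hδ : 0 ≤ δ := (norm_nonneg _).trans hnorm
  set F := frobNorm (S * H * S) ^ 2
  set a := ‖S * H * S‖
  have hpos : 0 < 1 - a := by linarith
  have hslack : 0 ≤ δ ^ 2 * F / (1 - a) := by positivity
  have hsplit :
      δ * (2 + δ) * F / (2 * (1 - a)) = (2 * δ * F / (1 - a) + δ ^ 2 * F / (1 - a)) / 2 := by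
    field_simp
  linarith

theorem stmt12 {d : ℕ} (Θs Θ H : Matrix (Fin d) (Fin d) ℝ)
    (hΘs : Θs.PosDef) (δ : ℝ) (hδ : δ ∈ Set.Icc (0:ℝ) 2)
    (hΘ : Θ.PosSemidef) (hle : (Θs - Θ).PosSemidef)
    (hnorm : specNorm (hΘ.sqrt * (hΘs.posSemidef.sqrt)⁻¹ - 1) ≤ δ)
    (hH : H.IsSymm) (h1 : (Θs⁻¹ - H).PosDef) (h2 : (H + Θs⁻¹).PosDef) :
    -(1/2) * Real.log ((1 - hΘ.sqrt * H * hΘ.sqrt).det) ≤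
      -(1/2) * Real.log ((1 - hΘs.posSemidef.sqrt * H * hΘs.posSemidef.sqrt).det)
      + (1/2) * ((Θ - Θs) * H).trace
      + δ * (2 + δ) * (frobNorm (hΘs.posSemidef.sqrt * H * hΘs.posSemidef.sqrt))^2 /
          (2 * (1 - specNorm (hΘs.posSemidef.sqrt * H * hΘs.posSemidef.sqrt))) :=
  stmt12_general Θs Θ H hΘs δ hΘ hle hnorm hH h1 h2
end
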